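/- arXiv:2001.06788 — 9 statements merged into one kernel-verified Lean document; each statement's English description precedes it below -/
import Mathlib

section
/- For every integer n ≥ 1: the polynomials f_n and g_n (in ℚ[X]) are squarefree (separable), neither has 0 as a root, and there is no complex number z with f_n(z) = 0 and g_n(z) = 0 (they share no roots). -/
/-!
Both polynomials have the shape `X ^ (n + 1) - 2 X ^ n ± 2`, which is Eisenstein at `2` over `ℤ`;
by Gauss's lemma they are irreducible, hence squarefree, over `ℚ`. Their difference is the
constant `4`, so they have no common root.
-/

open Polynomial

section Eisenstein

variable {R : Type*} [CommRing R] {n : ℕ} {a b : R}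

lemma monic_X_pow_succ_sub_C_mul_X_pow_add_C : (X ^ (n + 1) - C a * X ^ n + C b).Monic := by
  monicity!

lemma natDegree_X_pow_succ_sub_C_mul_X_pow_add_C [Nontrivial R] :
    (X ^ (n + 1) - C a * X ^ n + C b).natDegree = n + 1 := by
  compute_degree!

lemma isEisensteinAt_X_pow_succ_sub_C_mul_X_pow_add_C [Nontrivial R] {𝓟 : Ideal R} (hn : 0 < n)
    (ha : a ∈ 𝓟) (hb : b ∈ 𝓟) (hb2 : b ∉ 𝓟 ^ 2) :
    (X ^ (n + 1) - C a * X ^ n + C b).IsEisensteinAt 𝓟 where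
  leading h := by
    rw [monic_X_pow_succ_sub_C_mul_X_pow_add_C.leadingCoeff, ← Ideal.eq_top_iff_one] at h
    simp [h, Ideal.top_pow] at hb2
  mem {i} hi := by
    rw [natDegree_X_pow_succ_sub_C_mul_X_pow_add_C] at hi
    simp only [coeff_add, coeff_sub, coeff_C_mul, coeff_X_pow, coeff_C]
    split_ifs <;> first | omega | simp [ha, hb]
  notMem := by
    simpa [coeff_C, hn.ne, coeff_X_pow] using hb2

lemma irreducible_map_X_pow_succ_sub_C_mul_X_pow_add_C [IsDomain R] [IsIntegrallyClosed R]
    (K : Type*) [Field K] [Algebra R K] [IsFractionRing R K] {𝓟 : Ideal R} [𝓟.IsPrime]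
    (hn : 0 < n) (ha : a ∈ 𝓟) (hb : b ∈ 𝓟) (hb2 : b ∉ 𝓟 ^ 2) :
    Irreducible (X ^ (n + 1) - C (algebraMap R K a) * X ^ n + C (algebraMap R K b)) := by
  have hmonic := monic_X_pow_succ_sub_C_mul_X_pow_add_C (n := n) (a := a) (b := b)
  have hirr := (isEisensteinAt_X_pow_succ_sub_C_mul_X_pow_add_C hn ha hb hb2).irreducible
    ‹_› hmonic.isPrimitive (by rw [natDegree_X_pow_succ_sub_C_mul_X_pow_add_C]; omega)
  simpa using (hmonic.irreducible_iff_irreducible_map_fraction_map (K := K)).1 hirr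

end Eisenstein

/-- For every `n ≥ 1`: `f_n = X^{n+1} - 2X^n - 2` and `g_n = X^{n+1} - 2X^n + 2` are
squarefree in `ℚ[X]`, neither has `0` as a root, and they share no complex root. -/
theorem f_g_squarefree_no_common_root (n : ℕ) (hn : 1 ≤ n) :
    Squarefree (X ^ (n + 1) - C 2 * X ^ n - C 2 : ℚ[X]) ∧
    Squarefree (X ^ (n + 1) - C 2 * X ^ n + C 2 : ℚ[X]) ∧
    Polynomial.eval 0 (X ^ (n + 1) - C 2 * X ^ n - C 2 : ℚ[X]) ≠ 0 ∧
    Polynomial.eval 0 (X ^ (n + 1) - C 2 * X ^ n + C 2 : ℚ[X]) ≠ 0 ∧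
    ¬ ∃ z : ℂ, Polynomial.aeval z (X ^ (n + 1) - C 2 * X ^ n - C 2 : ℚ[X]) = 0 ∧
               Polynomial.aeval z (X ^ (n + 1) - C 2 * X ^ n + C 2 : ℚ[X]) = 0 := by
  have hn0 : n ≠ 0 := by omega
  have htwo_not_mem_sq : (2 : ℤ) ∉ Ideal.span {2} ^ 2 := by
    rw [Ideal.span_singleton_pow, Ideal.mem_span_singleton]; decide
  have hself : (2 : ℤ) ∈ Ideal.span {2} := Ideal.mem_span_singleton_self 2
  have : (Ideal.span {(2 : ℤ)}).IsPrime := (Ideal.span_singleton_prime two_ne_zero).2 Int.prime_two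
  refine ⟨?_, ?_, by simp [hn0], by simp [hn0], ?_⟩
  · have hf := irreducible_map_X_pow_succ_sub_C_mul_X_pow_add_C ℚ hn hself (neg_mem hself)
      (by rwa [neg_mem_iff])
    simpa [sub_eq_add_neg] using hf.squarefree
  · have hg := irreducible_map_X_pow_succ_sub_C_mul_X_pow_add_C ℚ hn hself hself htwo_not_mem_sq
    simpa using hg.squarefree
  · rintro ⟨z, hf, hg⟩
    simp only [map_add, map_sub, map_mul, map_pow, aeval_X, map_ofNat] at hf hg
    have : (4 : ℂ) = 0 := by linear_combination hg - hf
    norm_num at this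
end

section
/- For every integer n ≥ 1, f_n(2 + 2κ_n) = 0, i.e., 2 + 2κ_n is a real root of f_n. Moreover, for every n ≥ 6, every complex root z of f_n with z ≠ 2 + 2κ_n satisfies |z| < 1 + 1/n; in particular, 2 + 2κ_n is the unique root of f_n of modulus at least 1 + 1/n. -/
open Polynomial Finset


lemma cubic_le_pow (x : ℝ) (hx : 0 ≤ x) (n : ℕ) (hn : 3 ≤ n) :
    1 + n*x + (n*(n-1)/2)*x^2 + (n*(n-1)*(n-2)/6)*x^3 ≤ (1+x)^n := by
  induction n, hn using Nat.le_induction with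
  | base => push_cast; nlinarith
  | succ n hn ih =>
    have hn3 : (3:ℝ) ≤ n := by exact_mod_cast hn
    have h1 : (0:ℝ) ≤ 1 + x := by linarith
    have h2 : (1+x) * (1 + n*x + ((n:ℝ)*(n-1)/2)*x^2 + ((n:ℝ)*(n-1)*(n-2)/6)*x^3) ≤ (1+x)^(n+1) := by
      rw [pow_succ]
      calc (1+x) * (1 + (n:ℝ)*x + ((n:ℝ)*(n-1)/2)*x^2 + ((n:ℝ)*(n-1)*(n-2)/6)*x^3)
          = (1 + (n:ℝ)*x + ((n:ℝ)*(n-1)/2)*x^2 + ((n:ℝ)*(n-1)*(n-2)/6)*x^3) * (1+x) := by ring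
        _ ≤ (1+x)^n * (1+x) := mul_le_mul_of_nonneg_right ih h1
    push_cast
    nlinarith [h2, mul_nonneg (mul_nonneg (mul_nonneg
      (by linarith : (0:ℝ) ≤ (n:ℝ)) (by linarith : (0:ℝ) ≤ (n:ℝ)-1))
      (by linarith : (0:ℝ) ≤ (n:ℝ)-2)) (pow_nonneg hx 4)]

lemma pow_ge_52 (n : ℕ) (hn : 6 ≤ n) : (5/2 : ℝ) ≤ (1 + 1/n)^n := by
  have hn6 : (6:ℝ) ≤ n := by exact_mod_cast hn
  have hn0 : (0:ℝ) < n := by linarith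
  have h := cubic_le_pow (1/n) (by positivity) n (by omega)
  refine le_trans ?_ h
  have e1 : (n:ℝ) * (1/n) = 1 := by field_simp
  have e2 : ((n:ℝ)*(n-1)/2)*(1/n)^2 = (n-1)/(2*n) := by field_simp
  have e3 : ((n:ℝ)*(n-1)*(n-2)/6)*(1/n)^3 = (n-1)*(n-2)/(6*n^2) := by field_simp
  rw [e1, e2, e3]
  have h2 : (5/12:ℝ) ≤ (n-1)/(2*n) := by
    rw [div_le_div_iff₀ (by norm_num) (by linarith)]; linarith
  have h3 : (1/12:ℝ) ≤ ((n:ℝ)-1)*(n-2)/(6*n^2) := by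
    rw [div_le_div_iff₀ (by norm_num) (by positivity)]; nlinarith
  linarith

lemma keyineq (n : ℕ) (hn : 6 ≤ n) : 2*(n:ℝ)*(237/100)^(n-1) < (326/100)^n := by
  induction n, hn using Nat.le_induction with
  | base => norm_num
  | succ n hn ih =>
    have hn6 : (6:ℝ) ≤ n := by exact_mod_cast hn
    have e1 : (237/100:ℝ)^n = (237/100)^(n-1) * (237/100) := by
      rw [show n = (n-1)+1 from by omega, pow_succ]
      rw [show n-1+1-1 = n-1 from by omega]
    have e2 : (326/100:ℝ)^(n+1) = (326/100)^n * (326/100) := pow_succ _ _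
    have hp : (0:ℝ) < (237/100:ℝ)^(n-1) := by positivity
    push_cast
    rw [e1, e2]
    nlinarith [mul_lt_mul_of_pos_left ih (show (0:ℝ) < 326/100 by norm_num), hp,
      mul_le_mul_of_nonneg_right (show 2*((n:ℝ)+1)*(237/100) ≤ (326/100)*(2*n) by nlinarith) hp.le]

lemma abs_pow_sub_pow_le' (a b : ℂ) (M : ℝ) (n : ℕ) (ha : ‖a‖ ≤ M)
    (hb : ‖b‖ ≤ M) :
    ‖a^n - b^n‖ ≤ n * M^(n-1) * ‖a - b‖ := by
  have hM : 0 ≤ M := le_trans (norm_nonneg a) ha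
  rw [← geom_sum₂_mul, norm_mul]
  apply mul_le_mul_of_nonneg_right _ (norm_nonneg _)
  calc ‖∑ i ∈ Finset.range n, a^i * b^(n-1-i)‖
      ≤ ∑ i ∈ Finset.range n, ‖a^i * b^(n-1-i)‖ := norm_sum_le _ _
    _ ≤ ∑ _i ∈ Finset.range n, M^(n-1) := by
        apply Finset.sum_le_sum
        intro i hi
        rw [norm_mul, norm_pow, norm_pow]
        have hin : i < n := Finset.mem_range.mp hi
        calc ‖a‖ ^ i * ‖b‖ ^ (n-1-i) ≤ M^i * M^(n-1-i) := by
              apply mul_le_mul (pow_le_pow_left₀ (norm_nonneg a) ha i)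
                (pow_le_pow_left₀ (norm_nonneg b) hb _) (by positivity) (by positivity)
          _ = M^(n-1) := by rw [← pow_add]; congr 1; omega
    _ = n * M^(n-1) := by rw [Finset.sum_const, Finset.card_range, nsmul_eq_mul]

lemma boot (n : ℕ) (hn : 6 ≤ n) (z : ℂ) (h : ‖z‖ ^ n * ‖z-2‖ = 2)
    (c : ℝ) (hc1 : 1 ≤ c) (hc : c ≤ ‖z‖) :
    ‖z - 2‖ ≤ 2 / c^6 := by
  have h6 : c^6 ≤ ‖z‖ ^ n :=
    le_trans (pow_le_pow_right₀ hc1 hn) (pow_le_pow_left₀ (by linarith) hc n)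
  have hc6 : (0:ℝ) < c^6 := by positivity
  rw [le_div_iff₀ hc6]
  calc ‖z-2‖ * c^6 ≤ ‖z-2‖ * ‖z‖ ^ n :=
        mul_le_mul_of_nonneg_left h6 (norm_nonneg _)
    _ = 2 := by rw [mul_comm]; exact h

lemma lowerb (z : ℂ) : 2 - ‖z - 2‖ ≤ ‖z‖ := by
  have h := norm_sub_le z (z - 2)
  rw [show z - (z - 2) = 2 by ring] at h
  have h2 : ‖(2:ℂ)‖ = 2 := by norm_num
  linarith [h2 ▸ h]


lemma uniq_root (n : ℕ) (hn6 : 6 ≤ n) (κ : ℝ) (hκ0 : 0 < κ) (hκ1 : κ < 1/2)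
    (heq : (2 + 2*κ)^n * κ = 1) (z : ℂ)
    (hz : Polynomial.eval z (X ^ (n + 1) - C 2 * X ^ n - C 2 : ℂ[X]) = 0)
    (hge : 1 + 1/(n:ℝ) ≤ ‖z‖) : z = ((2 + 2*κ : ℝ) : ℂ) := by
  have hn0 : (0:ℝ) < n := by positivity
  set r : ℂ := ((2 + 2*κ : ℝ) : ℂ) with hr
  simp only [eval_sub, eval_mul, eval_pow, eval_C, eval_X] at hz
  have hzeq : z^n * (z - 2) = 2 := by linear_combination hz
  -- real root equation in ℂ
  have heq2 : ((2 + 2*κ)^n * (2*κ) : ℝ) = 2 := by linarith [heq]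
  have hreq : r^n * (r - 2) = 2 := by
    have : r^n * (r - 2) = (((2 + 2*κ)^n * (2*κ) : ℝ) : ℂ) := by rw [hr]; push_cast; ring
    rw [this, heq2]; norm_num
  -- modulus equation
  have habs : ‖z‖ ^ n * ‖z - 2‖ = 2 := by
    have := congrArg (norm : ℂ → ℝ) hzeq
    rwa [norm_mul, norm_pow, show ‖(2:ℂ)‖ = 2 by norm_num] at this
  -- bootstrap
  have hb0 : (5/2:ℝ) ≤ ‖z‖ ^ n := by
    calc (5/2:ℝ) ≤ (1 + 1/n)^n := pow_ge_52 n hn6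
      _ ≤ ‖z‖ ^ n := pow_le_pow_left₀ (by positivity) hge n
  have ha0 : ‖z - 2‖ ≤ 4/5 := by
    rw [show (4/5:ℝ) = 2/(5/2) by norm_num, le_div_iff₀ (by norm_num)]
    calc ‖z-2‖ * (5/2) ≤ ‖z-2‖ * ‖z‖ ^ n :=
          mul_le_mul_of_nonneg_left hb0 (norm_nonneg _)
      _ = 2 := by rw [mul_comm]; exact habs
  have hz1 : (6/5:ℝ) ≤ ‖z‖ := by have := lowerb z; linarith
  have ha1 : ‖z - 2‖ ≤ 67/100 := by
    have := boot n hn6 z habs (6/5) (by norm_num) hz1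
    calc ‖z-2‖ ≤ 2/(6/5:ℝ)^6 := this
      _ ≤ 67/100 := by norm_num
  have hz2 : (133/100:ℝ) ≤ ‖z‖ := by have := lowerb z; linarith
  have ha2 : ‖z - 2‖ ≤ 37/100 := by
    have := boot n hn6 z habs (133/100) (by norm_num) hz2
    calc ‖z-2‖ ≤ 2/(133/100:ℝ)^6 := this
      _ ≤ 37/100 := by norm_num
  have hz3 : (163/100:ℝ) ≤ ‖z‖ := by have := lowerb z; linarith
  have hzM : ‖z‖ ≤ 237/100 := by
    have h := norm_add_le (z - 2) 2
    rw [show z - 2 + 2 = z by ring, show ‖(2:ℂ)‖ = 2 by norm_num] at h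
    linarith
  -- κ bounds
  have hκn : κ * 2^n ≤ 1 := by
    calc κ * 2^n ≤ κ * (2+2*κ)^n := by
          apply mul_le_mul_of_nonneg_left (pow_le_pow_left₀ (by norm_num) (by linarith) n) hκ0.le
      _ = 1 := by rw [mul_comm]; exact heq
  have h2n : (64:ℝ) ≤ 2^n := by
    calc (64:ℝ) = 2^6 := by norm_num
      _ ≤ 2^n := pow_le_pow_right₀ (by norm_num) hn6
  have hκ64 : κ ≤ 1/64 := by
    have h2p : (0:ℝ) < 2^n := by positivity
    nlinarith
  have hrabs : ‖r‖ = 2 + 2*κ := by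
    rw [hr, Complex.norm_real, Real.norm_eq_abs, abs_of_pos (by linarith)]
  have hrM : ‖r‖ ≤ 237/100 := by rw [hrabs]; linarith
  have hr2 : ‖r - 2‖ = 2*κ := by
    rw [hr, show (((2 + 2*κ : ℝ)) : ℂ) - 2 = ((2*κ:ℝ):ℂ) by push_cast; ring,
      Complex.norm_real, Real.norm_eq_abs, abs_of_pos (by linarith)]
  -- key identity
  by_contra hne
  have hdpos : 0 < ‖z - r‖ := by
    rw [norm_pos_iff]
    exact sub_ne_zero.mpr hne
  have hkey : z^n * (z - r) = (r^n - z^n) * (r - 2) := by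
    linear_combination hzeq - hreq
  have hkabs : ‖z‖ ^ n * ‖z - r‖
      = ‖r^n - z^n‖ * (2*κ) := by
    have := congrArg (norm : ℂ → ℝ) hkey
    rwa [norm_mul, norm_pow, norm_mul, hr2] at this
  have hbnd : ‖r^n - z^n‖ ≤ n * (237/100)^(n-1) * ‖z - r‖ := by
    have := abs_pow_sub_pow_le' r z (237/100) n hrM hzM
    rwa [norm_sub_rev r z] at this
  -- combine: (163/100)^n * 2^n * |z-r| ≤ 2*n*(237/100)^(n-1)*|z-r|
  have hchain : (326/100:ℝ)^n * ‖z - r‖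
      ≤ 2*n*(237/100)^(n-1) * ‖z - r‖ := by
    have e : (326/100:ℝ)^n = (163/100)^n * 2^n := by
      rw [← mul_pow]; norm_num
    calc (326/100:ℝ)^n * ‖z - r‖
        = (2:ℝ)^n * ((163/100)^n * ‖z - r‖) := by rw [e]; ring
      _ ≤ (2:ℝ)^n * (‖z‖ ^ n * ‖z - r‖) := by
          apply mul_le_mul_of_nonneg_left _ (by positivity)
          exact mul_le_mul_of_nonneg_right (pow_le_pow_left₀ (by norm_num) hz3 n) hdpos.le
      _ = (2:ℝ)^n * (‖r^n - z^n‖ * (2*κ)) := by rw [hkabs]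
      _ = ‖r^n - z^n‖ * (2 * (κ * 2^n)) := by ring
      _ ≤ ‖r^n - z^n‖ * 2 := by
          apply mul_le_mul_of_nonneg_left _ (norm_nonneg _)
          nlinarith
      _ ≤ (n * (237/100)^(n-1) * ‖z - r‖) * 2 :=
          mul_le_mul_of_nonneg_right hbnd (by norm_num)
      _ = 2*n*(237/100)^(n-1) * ‖z - r‖ := by ring
  have hfin : (326/100:ℝ)^n ≤ 2*n*(237/100)^(n-1) :=
    le_of_mul_le_mul_right hchain hdpos
  exact absurd hfin (not_le.mpr (keyineq n hn6))

/-- For every `n ≥ 1`, `2 + 2κ_n` is a root of `f_n = X^{n+1} - 2X^n - 2`, where `κ_n`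
is the unique `κ ∈ (0,1/2)` with `(2+2κ)^n κ = 1`.  Moreover for `n ≥ 6`, every complex
root of `f_n` other than `2 + 2κ_n` has modulus `< 1 + 1/n`; in particular `2 + 2κ_n`
is the unique root of modulus at least `1 + 1/n`. -/
theorem f_root_two_add_two_kappa (n : ℕ) (hn : 1 ≤ n) (κ : ℝ)
    (hκ : κ ∈ Set.Ioo (0 : ℝ) (1/2)) (heq : (2 + 2*κ)^n * κ = 1) :
    Polynomial.eval (2 + 2*κ) (X ^ (n + 1) - C 2 * X ^ n - C 2 : ℝ[X]) = 0 ∧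
    (6 ≤ n →
      (∀ z : ℂ, Polynomial.eval z (X ^ (n + 1) - C 2 * X ^ n - C 2 : ℂ[X]) = 0 →
        z ≠ ((2 + 2*κ : ℝ) : ℂ) → ‖z‖ < 1 + 1/n) ∧
      (∀ z : ℂ, Polynomial.eval z (X ^ (n + 1) - C 2 * X ^ n - C 2 : ℂ[X]) = 0 →
        1 + 1/n ≤ ‖z‖ → z = ((2 + 2*κ : ℝ) : ℂ))) := by
  obtain ⟨hκ0, hκ1⟩ := hκ
  constructor
  · simp only [eval_sub, eval_mul, eval_pow, eval_C, eval_X]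
    linear_combination 2*heq
  · intro hn6
    constructor
    · intro z hz hne
      by_contra h
      push_neg at h
      exact hne (uniq_root n hn6 κ hκ0 hκ1 heq z hz h)
    · intro z hz hge
      exact uniq_root n hn6 κ hκ0 hκ1 heq z hz hge
end

section
/- For every integer n ≥ 5, there exists a real number r with 2^{−n} < r < 2^{−n} + 2n·4^{−n} such that g_n(2 − 2r) = 0; that is, g_n has a real root in the open interval (2 − 2(2^{−n} + 2n·4^{−n}), 2 − 2·2^{−n}). -/
/-! Writing `x = 2 - 2r`, one has `g_n(x) = 2 (1 - 2^n r (1 - r)^n)`, so it suffices to find `r`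
with `2^n r (1 - r)^n = 1`. With `a = 2^{-n}` this product is `(1 - a)^n < 1` at `r = a`, while at
`r = a (1 + 2na) = 2^{-n} + 2n·4^{-n}` Bernoulli's inequality bounds it below by
`1 + t (1 - 4t - 4t²)` with `t = na ≤ 1/5`, which exceeds `1`. The intermediate value theorem
finishes the proof. -/

open Polynomial

lemma eval_two_sub_two_mul_g (n : ℕ) (r : ℝ) :
    eval (2 - 2 * r) (X ^ (n + 1) - C 2 * X ^ n + C 2 : ℝ[X]) = 2 * (1 - 2 ^ n * r * (1 - r) ^ n) := by
  have hx : (2 - 2 * r) ^ n = 2 ^ n * (1 - r) ^ n := by rw [← mul_pow]; ring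
  simp only [eval_add, eval_sub, eval_mul, eval_pow, eval_C, eval_X, pow_succ, hx]
  ring

lemma Nat.five_mul_le_two_pow {n : ℕ} (hn : 5 ≤ n) : 5 * n ≤ 2 ^ n := by
  induction n, hn using Nat.le_induction with
  | base => norm_num
  | succ m hm ih =>
    have : 5 ≤ 2 ^ m := by omega
    rw [pow_succ]
    omega

lemma one_lt_one_add_two_mul_mul_one_sub_pow {n : ℕ} {a : ℝ} (hn : n ≠ 0) (ha : 0 < a)
    (hsmall : 5 * n * a ≤ 1) :
    1 < (1 + 2 * n * a) * (1 - a * (1 + 2 * n * a)) ^ n := by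
  set t : ℝ := n * a with ht
  have hn1 : (1 : ℝ) ≤ n := by exact_mod_cast Nat.one_le_iff_ne_zero.mpr hn
  have ht0 : 0 < t := by positivity
  have ha5 : a ≤ 1 / 5 := by nlinarith
  have hbernoulli : 1 - n * (a * (1 + 2 * t)) ≤ (1 - a * (1 + 2 * t)) ^ n := by
    simpa only [mul_neg, ← sub_eq_add_neg] using
      one_add_mul_le_pow (a := -(a * (1 + 2 * t))) (by nlinarith) n
  calc 1 < 1 + t * (1 - 4 * t - 4 * t ^ 2) := by nlinarith
    _ = (1 + 2 * t) * (1 - n * (a * (1 + 2 * t))) := by rw [ht]; ring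
    _ ≤ (1 + 2 * t) * (1 - a * (1 + 2 * t)) ^ n := by gcongr
    _ = (1 + 2 * n * a) * (1 - a * (1 + 2 * n * a)) ^ n := by rw [ht]; ring

/-- For every `n ≥ 5`, the polynomial `g_n = X^{n+1} - 2X^n + 2` has a real root `2 - 2r`
with `2^{-n} < r < 2^{-n} + 2n·4^{-n}`. -/
theorem g_real_root_near_two (n : ℕ) (hn : 5 ≤ n) :
    ∃ r : ℝ, 1/2^n < r ∧ r < 1/2^n + 2*n/4^n ∧
      Polynomial.eval (2 - 2*r) (X ^ (n + 1) - C 2 * X ^ n + C 2 : ℝ[X]) = 0 := by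
  set a : ℝ := 1 / 2 ^ n with ha
  have ha0 : 0 < a := by positivity
  have hscale : 2 ^ n * a = 1 := by rw [ha]; field_simp
  have hsmall : 5 * n * a ≤ 1 := by
    rw [ha, mul_one_div, div_le_one (by positivity)]
    exact_mod_cast Nat.five_mul_le_two_pow hn
  have hb : 1 / 2 ^ n + 2 * n / 4 ^ n = a * (1 + 2 * n * a) := by
    rw [ha, show (4 : ℝ) ^ n = 2 ^ n * 2 ^ n by rw [← mul_pow]; norm_num]
    field_simp
  have hab : a < a * (1 + 2 * n * a) := by
    have : (0 : ℝ) < n := by exact_mod_cast (show 0 < n by omega)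
    nlinarith [mul_pos this ha0]
  have hφa : 2 ^ n * a * (1 - a) ^ n < 1 := by
    rw [hscale, one_mul]
    have ha1 : a ≤ 1 := by
      rw [ha]; exact div_le_one_of_le₀ (one_le_pow₀ one_le_two) (by positivity)
    exact pow_lt_one₀ (by linarith) (by linarith) (by omega)
  have hφb : 1 < 2 ^ n * (a * (1 + 2 * n * a)) * (1 - a * (1 + 2 * n * a)) ^ n := by
    rw [← mul_assoc, hscale, one_mul]
    exact one_lt_one_add_two_mul_mul_one_sub_pow (by omega) ha0 hsmall
  obtain ⟨r, ⟨har, hrb⟩, hr⟩ := intermediate_value_Ioo hab.le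
    (by fun_prop : Continuous fun r : ℝ => 2 ^ n * r * (1 - r) ^ n).continuousOn ⟨hφa, hφb⟩
  refine ⟨r, har, hb ▸ hrb, ?_⟩
  rw [eval_two_sub_two_mul_g, show 2 ^ n * r * (1 - r) ^ n = 1 from hr]
  ring
end

section
/- For every integer n ≥ 1 and every complex number z with |z| ≤ 1 − 1/n, one has f_n(z) ≠ 0 and g_n(z) ≠ 0; that is, neither f_n nor g_n has any root in the closed disk of radius 1 − 1/n centered at 0. -/
open Polynomial

lemma key_abs_lt (n : ℕ) (hn : 1 ≤ n) (z : ℂ) (hz : ‖z‖ ≤ 1 - 1/n) :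
    ‖z ^ (n + 1) - 2 * z ^ n‖ < 2 := by
  set r : ℝ := ‖z‖ with hr
  have hn0 : (0:ℝ) < n := by exact_mod_cast hn
  have hrn : (1:ℝ) - 1/n < 1 := by
    have : (0:ℝ) < 1/n := by positivity
    linarith
  have hr0 : 0 ≤ r := norm_nonneg z
  have hr1 : r < 1 := lt_of_le_of_lt hz hrn
  have hstep : ‖z ^ (n + 1) - 2 * z ^ n‖ ≤ r ^ n * (r + 2) := by
    calc ‖z ^ (n + 1) - 2 * z ^ n‖
        ≤ ‖z ^ (n + 1)‖ + ‖2 * z ^ n‖ :=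
          norm_sub_le _ _
      _ = r ^ (n + 1) + 2 * r ^ n := by
          simp [norm_mul, norm_pow, Complex.norm_two, hr]
      _ = r ^ n * (r + 2) := by ring
  have hexp : (1 - 1/(n:ℝ)) ^ n ≤ Real.exp (-1) := by
    have h1 : (1:ℝ) - 1/n ≤ Real.exp (-(1/n)) := by
      have := Real.add_one_le_exp (-(1/(n:ℝ)))
      linarith
    have h0 : (0:ℝ) ≤ 1 - 1/n := by
      have : (1:ℝ)/n ≤ 1 := by
        rw [div_le_one hn0]; exact_mod_cast hn
      linarith
    calc (1 - 1/(n:ℝ)) ^ n ≤ Real.exp (-(1/n)) ^ n := pow_le_pow_left₀ h0 h1 n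
      _ = Real.exp ((n : ℝ) * -(1/n)) := (Real.exp_nat_mul _ n).symm
      _ = Real.exp (-1) := by
          congr 1
          field_simp
  have hexp2 : Real.exp (-1) < 1/2 := by
    rw [Real.exp_neg]
    rw [inv_lt_comm₀ (Real.exp_pos 1) (by norm_num)]
    calc (1/2 : ℝ)⁻¹ = 2 := by norm_num
      _ < Real.exp 1 := by
          have := Real.add_one_le_exp (1:ℝ)
          nlinarith [Real.add_one_le_exp (1:ℝ), Real.exp_pos (1:ℝ),
            Real.exp_one_gt_d9]
  have hpow : r ^ n ≤ (1 - 1/(n:ℝ)) ^ n := pow_le_pow_left₀ hr0 hz n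
  have : r ^ n * (r + 2) < 2 := by
    have h3 : r + 2 ≤ 3 := by linarith
    have hrn0 : 0 ≤ r ^ n := pow_nonneg hr0 n
    calc r ^ n * (r + 2) ≤ r ^ n * 3 := by nlinarith
      _ ≤ (1 - 1/(n:ℝ)) ^ n * 3 := by nlinarith
      _ ≤ Real.exp (-1) * 3 := by nlinarith
      _ < 2 := by nlinarith
  linarith

/-- For every `n ≥ 1`, neither `f_n = X^{n+1} - 2X^n - 2` nor `g_n = X^{n+1} - 2X^n + 2`
has a complex root in the closed disk of radius `1 - 1/n`. -/
theorem f_g_no_root_in_small_disk (n : ℕ) (hn : 1 ≤ n) :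
    ∀ z : ℂ, ‖z‖ ≤ 1 - 1/n →
      Polynomial.eval z (X ^ (n + 1) - C 2 * X ^ n - C 2 : ℂ[X]) ≠ 0 ∧
      Polynomial.eval z (X ^ (n + 1) - C 2 * X ^ n + C 2 : ℂ[X]) ≠ 0 := by
  intro z hz
  have hkey := key_abs_lt n hn z hz
  constructor
  · intro h
    simp only [eval_sub, eval_add, eval_mul, eval_pow, eval_X, eval_C] at h
    have : z ^ (n + 1) - 2 * z ^ n = 2 := by linear_combination h
    rw [this] at hkey
    simp [Complex.norm_two] at hkey
  · intro h
    simp only [eval_sub, eval_add, eval_mul, eval_pow, eval_X, eval_C] at h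
    have : z ^ (n + 1) - 2 * z ^ n = -2 := by linear_combination h
    rw [this] at hkey
    rw [norm_neg, Complex.norm_two] at hkey
    linarith
end

section
/- For every integer n ≥ 6, the polynomial f_n has exactly n complex roots, counted with multiplicity, in the open disk {z ∈ ℂ : |z| < 1 + 1/n}, and likewise g_n has exactly n complex roots, counted with multiplicity, in that open disk. (Since deg f_n = deg g_n = n+1, each has exactly one root of modulus at least 1 + 1/n.) -/
open Polynomial Finset

noncomputable abbrev Complex.abs : AbsoluteValue ℂ ℝ := NormedField.toAbsoluteValue ℂ

theorem Complex.abs_apply (z : ℂ) : Complex.abs z = ‖z‖ := rfl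

theorem Complex.abs_ofReal (x : ℝ) : Complex.abs (x:ℂ) = |x| := by simp [Complex.abs_apply]


/-- second-order binomial lower bound -/
lemma binom2 (x : ℝ) (hx : 0 ≤ x) (n : ℕ) :
    1 + (n:ℝ)*x + (n:ℝ)*((n:ℝ)-1)/2 * x^2 ≤ (1+x)^n := by
  induction n with
  | zero => norm_num
  | succ k ih =>
    have h1 : (0:ℝ) ≤ (1+x)^k := by positivity
    have hk : (0:ℝ) ≤ (k:ℝ)*((k:ℝ)-1) := by
      rcases Nat.eq_zero_or_pos k with h | h
      · simp [h]
      · have : (1:ℝ) ≤ (k:ℝ) := by exact_mod_cast h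
        nlinarith
    push_cast
    rw [show (1+x)^(k+1) = (1+x)^k*(1+x) from pow_succ _ _]
    nlinarith [mul_le_mul_of_nonneg_right ih (by linarith : (0:ℝ) ≤ 1+x),
      mul_nonneg hk (mul_nonneg hx (mul_nonneg hx hx)), mul_nonneg (Nat.cast_nonneg (α:=ℝ) k) hx]

lemma L2 (n : ℕ) (hn : 6 ≤ n) :
    2 < (1 + 1/(n:ℝ))^n * (1 - 1/(n:ℝ)) := by
  have hN : (6:ℝ) ≤ (n:ℝ) := by exact_mod_cast hn
  have hN0 : (0:ℝ) < n := by linarith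
  have h := binom2 (1/(n:ℝ)) (by positivity) n
  have h2 : (0:ℝ) < 1 - 1/(n:ℝ) := by
    rw [sub_pos, div_lt_one hN0]; linarith
  have key : 2 + ((n:ℝ)-1)/(2*(n:ℝ)) ≤ (1 + 1/(n:ℝ))^n := by
    have : 1 + (n:ℝ)*(1/(n:ℝ)) + (n:ℝ)*((n:ℝ)-1)/2 * (1/(n:ℝ))^2
        = 2 + ((n:ℝ)-1)/(2*(n:ℝ)) := by field_simp; ring
    linarith [this ▸ h]
  have h3 : (2 + ((n:ℝ)-1)/(2*(n:ℝ)))*(1-1/(n:ℝ))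
      = 2 + ((n:ℝ)^2 - 6*(n:ℝ)+1)/(2*(n:ℝ)^2) := by field_simp; ring
  have h4 : (0:ℝ) < ((n:ℝ)^2 - 6*(n:ℝ)+1)/(2*(n:ℝ)^2) := by
    apply div_pos (by nlinarith) (by positivity)
  nlinarith [mul_le_mul_of_nonneg_right key h2.le]

lemma L3 (n : ℕ) (hn : 6 ≤ n) : (20:ℝ) < (19/10)^n := by
  have : ((19:ℝ)/10)^6 ≤ (19/10)^n := pow_le_pow_right₀ (by norm_num) hn
  nlinarith

lemma L4 (n : ℕ) (hn : 6 ≤ n) : (n:ℝ) + 1 < (19/10)^n := by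
  have hN : (6:ℝ) ≤ (n:ℝ) := by exact_mod_cast hn
  have h := binom2 (9/10) (by norm_num) n
  nlinarith

lemma L5 (n : ℕ) (hn : 6 ≤ n) : 2*(n:ℝ)*(21/10)^(n-1) < (361/100)^n := by
  induction n, hn using Nat.le_induction with
  | base => norm_num
  | succ k hk ih =>
    have hK : (6:ℝ) ≤ (k:ℝ) := by exact_mod_cast hk
    have h1 : (0:ℝ) < (21/10:ℝ)^(k-1) := by positivity
    have h2 : (0:ℝ) < (361/100:ℝ)^k := by positivity
    have e1 : (21/10:ℝ)^k = (21/10)^(k-1)*(21/10) := by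
      rw [← pow_succ]; congr 1; omega
    have e2 : (361/100:ℝ)^(k+1) = (361/100)^k*(361/100) := by rw [pow_succ]
    push_cast
    rw [e1, e2]
    nlinarith [ih, mul_pos h1 (by linarith : (0:ℝ) < (k:ℝ))]

/-- any root with modulus ≥ 1+1/n has modulus ≥ 1.9 -/
lemma large_root (n : ℕ) (hn : 6 ≤ n) {z : ℂ}
    (hz : Complex.abs z ^ n * Complex.abs (z-2) = 2)
    (h : 1 + 1/(n:ℝ) ≤ Complex.abs z) : (19/10:ℝ) ≤ Complex.abs z := by
  by_contra h19
  push_neg at h19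
  set t := Complex.abs z with ht
  have hN : (6:ℝ) ≤ (n:ℝ) := by exact_mod_cast hn
  have hr1 : (1:ℝ) < 1 + 1/(n:ℝ) := by
    have : (0:ℝ) < 1/(n:ℝ) := by positivity
    linarith
  have ht0 : (0:ℝ) < t := by linarith
  -- |z-2| ≥ 2 - t
  have htri : 2 - t ≤ Complex.abs (z - 2) := by
    have h2 : Complex.abs 2 ≤ Complex.abs z + Complex.abs (2 - z) := by
      calc Complex.abs 2 = Complex.abs (z + (2 - z)) := by ring_nf
        _ ≤ _ := Complex.abs.add_le _ _
    rw [Complex.abs.map_sub 2 z] at h2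
    have h3 : Complex.abs 2 = 2 := by norm_num [Complex.abs_apply]
    rw [h3] at h2
    linarith
  have hkey : t^n * (2 - t) ≤ 2 := by
    calc t^n * (2-t) ≤ t^n * Complex.abs (z-2) :=
          mul_le_mul_of_nonneg_left htri (by positivity)
      _ = 2 := hz
  -- the function φ u = 2u^n - u^(n+1)
  set φ : ℝ → ℝ := fun u => 2*u^n - u^(n+1) with hφ
  have hderiv : ∀ u : ℝ, HasDerivAt φ (2*((n:ℝ)*u^(n-1)) - ((n:ℝ)+1)*u^n) u := by
    intro u
    have h1 := (hasDerivAt_pow n u).const_mul (2:ℝ)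
    have h2 := hasDerivAt_pow (n+1) u
    have := h1.sub h2
    simp at this; exact this
  have hderiveq : ∀ u : ℝ, deriv φ u = 2*((n:ℝ)*u^(n-1)) - ((n:ℝ)+1)*u^n :=
    fun u => (hderiv u).deriv
  have hcont : Continuous φ := by
    apply Continuous.sub
    · exact continuous_const.mul (continuous_pow n)
    · exact continuous_pow (n+1)
  set m : ℝ := 2*(n:ℝ)/((n:ℝ)+1) with hm
  have hm19 : ∀ u : ℝ, 0 < u → u < m → 0 < deriv φ u := by
    intro u hu0 hum
    rw [hderiveq]
    have hpow : (0:ℝ) < u^(n-1) := pow_pos hu0 _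
    have hun : u^n = u^(n-1)*u := by
      rw [← pow_succ]; congr 1; omega
    rw [hun]
    have : ((n:ℝ)+1)*u < 2*(n:ℝ) := by
      rw [hm, lt_div_iff₀ (by linarith)] at hum
      nlinarith
    nlinarith
  have hm19' : ∀ u : ℝ, m < u → 0 < u → deriv φ u < 0 := by
    intro u hum hu0
    rw [hderiveq]
    have hpow : (0:ℝ) < u^(n-1) := pow_pos hu0 _
    have hun : u^n = u^(n-1)*u := by
      rw [← pow_succ]; congr 1; omega
    rw [hun]
    have : 2*(n:ℝ) < ((n:ℝ)+1)*u := by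
      rw [hm, div_lt_iff₀ (by linarith)] at hum
      nlinarith
    nlinarith
  have hφval : ∀ u : ℝ, φ u = u^n * (2 - u) := by
    intro u; rw [hφ]; simp only; rw [pow_succ]; ring
  rcases le_or_gt t m with hcase | hcase
  · -- monotone on [0,m]
    have hmono : StrictMonoOn φ (Set.Icc 0 m) := by
      apply strictMonoOn_of_deriv_pos (convex_Icc 0 m) hcont.continuousOn
      intro u hu
      rw [interior_Icc, Set.mem_Ioo] at hu
      exact hm19 u hu.1 hu.2
    have hrm : 1 + 1/(n:ℝ) ≤ m := by
      rw [hm, le_div_iff₀ (by linarith)]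
      have hinv : (n:ℝ)*(1/(n:ℝ)) = 1 := by
        field_simp
      have h1n : 1/(n:ℝ) ≤ 1 := by
        rw [div_le_one (by linarith)]; linarith
      nlinarith [hinv, h1n]
    have hmem1 : (1 + 1/(n:ℝ)) ∈ Set.Icc (0:ℝ) m := ⟨by linarith, hrm⟩
    have hmem2 : t ∈ Set.Icc (0:ℝ) m := ⟨by linarith, hcase⟩
    have h1 := hmono.monotoneOn hmem1 hmem2 h
    have h2 := L2 n hn
    rw [hφval, hφval] at h1
    have : (1+1/(n:ℝ))^n * (2 - (1+1/(n:ℝ))) = (1+1/(n:ℝ))^n * (1 - 1/(n:ℝ)) := by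
      ring_nf
    rw [this] at h1
    nlinarith
  · -- antitone on [m, 2]
    have hanti : StrictAntiOn φ (Set.Icc m 2) := by
      apply strictAntiOn_of_deriv_neg (convex_Icc m 2) hcont.continuousOn
      intro u hu
      rw [interior_Icc, Set.mem_Ioo] at hu
      have hm0 : (0:ℝ) < m := by
        rw [hm]; positivity
      exact hm19' u hu.1 (by linarith)
    have hmem1 : t ∈ Set.Icc m (2:ℝ) := ⟨hcase.le, by linarith⟩
    have hmem2 : (19/10:ℝ) ∈ Set.Icc m (2:ℝ) := ⟨by linarith, by norm_num⟩
    have h1 := hanti hmem1 hmem2 h19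
    have h2 := L3 n hn
    rw [hφval, hφval] at h1
    nlinarith [pow_pos ht0 n]

lemma root_unique (n : ℕ) (hn : 6 ≤ n) {a : ℂ} (ha : Complex.abs a = 2) {z w : ℂ}
    (hz : z^n*(z-2) = a) (hw : w^n*(w-2) = a)
    (hz19 : (19/10:ℝ) ≤ Complex.abs z) (hw19 : (19/10:ℝ) ≤ Complex.abs w) : z = w := by
  have hpow19 : (20:ℝ) < (19/10)^n := L3 n hn
  have hpow0 : (0:ℝ) < (19/10:ℝ)^n := by positivity
  -- moduli bounds
  have habs : ∀ v : ℂ, v^n*(v-2) = a → (19/10:ℝ) ≤ Complex.abs v →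
      Complex.abs (v - 2) ≤ 2/(19/10)^n ∧ Complex.abs v ≤ 21/10 := by
    intro v hv hv19
    have h1 : Complex.abs v ^ n * Complex.abs (v - 2) = 2 := by
      have := congrArg Complex.abs hv
      rwa [map_mul, map_pow, ha] at this
    have hvn : (19/10:ℝ)^n ≤ Complex.abs v ^ n :=
      pow_le_pow_left₀ (by norm_num) hv19 n
    have hd : Complex.abs (v - 2) ≤ 2/(19/10)^n := by
      rw [le_div_iff₀ hpow0]
      calc Complex.abs (v-2) * (19/10)^n ≤ Complex.abs (v-2) * Complex.abs v ^ n :=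
            mul_le_mul_of_nonneg_left hvn (Complex.abs.nonneg _)
        _ = 2 := by rw [mul_comm]; exact h1
    have hd' : Complex.abs (v - 2) ≤ 1/10 := by
      have : (2:ℝ)/(19/10)^n ≤ 1/10 := by
        rw [div_le_div_iff₀ hpow0 (by norm_num)]
        linarith
      linarith
    constructor
    · exact hd
    · calc Complex.abs v = Complex.abs ((v - 2) + 2) := by ring_nf
        _ ≤ Complex.abs (v-2) + Complex.abs 2 := Complex.abs.add_le _ _
        _ ≤ 1/10 + 2 := by
            have : Complex.abs 2 = 2 := by norm_num [Complex.abs_apply]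
            linarith
        _ = 21/10 := by norm_num
  obtain ⟨hz2, hzB⟩ := habs z hz hz19
  obtain ⟨hw2, hwB⟩ := habs w hw hw19
  set S : ℂ := ∑ i ∈ range n, z^i * w^(n-1-i) with hS
  -- the factorization
  have hfact : (z - w) * ((w-2)*S + z^n) = 0 := by
    have e1 := geom_sum₂_mul z w (n+1)
    have e2 := geom_sum₂_mul z w n
    have hS' : ∑ i ∈ range (n+1), z^i * w^(n+1-1-i) = w * S + z^n := by
      rw [Finset.sum_range_succ]
      have : ∀ i ∈ range n, z^i * w^(n+1-1-i) = w * (z^i * w^(n-1-i)) := by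
        intro i hi
        rw [mem_range] at hi
        have h' : n+1-1-i = (n-1-i)+1 := by omega
        rw [h', pow_succ]; ring
      rw [Finset.sum_congr rfl this, ← Finset.mul_sum, ← hS]
      have h'' : n+1-1-n = 0 := by omega
      rw [h'', pow_zero, mul_one]
    rw [hS'] at e1
    linear_combination e1 - 2*e2 + hz - hw
  -- the second factor is nonzero
  have hSbound : Complex.abs S ≤ (n:ℝ) * (21/10)^(n-1) := by
    calc Complex.abs S ≤ ∑ i ∈ range n, Complex.abs (z^i * w^(n-1-i)) :=
          Complex.abs.sum_le _ _
      _ ≤ ∑ i ∈ range n, ((21:ℝ)/10)^(n-1) := by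
          apply Finset.sum_le_sum
          intro i hi
          rw [mem_range] at hi
          rw [map_mul, map_pow, map_pow]
          calc Complex.abs z ^ i * Complex.abs w ^ (n-1-i)
              ≤ (21/10:ℝ)^i * (21/10)^(n-1-i) := by
                apply mul_le_mul (pow_le_pow_left₀ (Complex.abs.nonneg _) hzB i)
                  (pow_le_pow_left₀ (Complex.abs.nonneg _) hwB _) (by positivity) (by positivity)
            _ = (21/10:ℝ)^(n-1) := by
                rw [← pow_add]; congr 1; omega
      _ = (n:ℝ) * (21/10)^(n-1) := by
          rw [Finset.sum_const, card_range, nsmul_eq_mul]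
  have hfac2 : (w-2)*S + z^n ≠ 0 := by
    intro hzero
    have h1 : Complex.abs (z^n) = Complex.abs ((w-2)*S) := by
      have : z^n = -((w-2)*S) := by linear_combination hzero
      rw [this, Complex.abs.map_neg]
    have h2 : (19/10:ℝ)^n ≤ Complex.abs (z^n) := by
      rw [map_pow]
      exact pow_le_pow_left₀ (by norm_num) hz19 n
    have h3 : Complex.abs ((w-2)*S) ≤ (2/(19/10)^n) * ((n:ℝ)*(21/10)^(n-1)) := by
      rw [map_mul]
      exact mul_le_mul hw2 hSbound (Complex.abs.nonneg _) (by positivity)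
    have h4 : (2/(19/10)^n) * ((n:ℝ)*(21/10)^(n-1)) < (19/10:ℝ)^n := by
      rw [div_mul_eq_mul_div, div_lt_iff₀ hpow0]
      calc 2 * ((n:ℝ)*(21/10)^(n-1)) = 2*(n:ℝ)*(21/10)^(n-1) := by ring
        _ < (361/100)^n := L5 n hn
        _ = (19/10:ℝ)^n * (19/10)^n := by
            rw [← mul_pow]; norm_num
    linarith
  rcases mul_eq_zero.mp hfact with h | h
  · exact sub_eq_zero.mp h
  · exact absurd h hfac2

lemma key (n : ℕ) (hn : 6 ≤ n) (a : ℝ) (ha : |a| = 2) (x : ℝ) (hx19 : 19/10 ≤ x)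
    (hxa : x^n * (x-2) = a) :
    (((X ^ (n + 1) - C 2 * X ^ n - C (a:ℂ) : ℂ[X]).roots.filter
        fun z => Complex.abs z < 1 + 1/(n:ℕ)).card = n) := by
  have hN : (6:ℝ) ≤ (n:ℝ) := by exact_mod_cast hn
  set p : ℂ[X] := X ^ (n + 1) - C 2 * X ^ n - C (a:ℂ) with hp
  have hdeg : p.natDegree = n + 1 := by
    rw [hp]
    compute_degree!
  have hp0 : p ≠ 0 := by
    intro h
    rw [h] at hdeg
    simp at hdeg
  have hcard : p.roots.card = n + 1 := by
    rw [← hdeg]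
    exact (splits_iff_card_roots).mp (IsAlgClosed.splits p)
  have haC : Complex.abs (a:ℂ) = 2 := by
    rw [Complex.abs_ofReal, ha]
  -- root equation
  have hroot_eq : ∀ z : ℂ, z ∈ p.roots → z^n * (z - 2) = (a:ℂ) := by
    intro z hz
    have hz' := isRoot_of_mem_roots hz
    rw [hp] at hz'
    simp only [IsRoot, eval_sub, eval_mul, eval_pow, eval_C, eval_X] at hz'
    linear_combination hz'
  have habs_eq : ∀ z : ℂ, z ∈ p.roots → Complex.abs z ^ n * Complex.abs (z-2) = 2 := by
    intro z hz
    have := congrArg Complex.abs (hroot_eq z hz)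
    rwa [map_mul, map_pow, haC] at this
  -- x is a root
  have hxC : (x:ℂ)^n * ((x:ℂ) - 2) = (a:ℂ) := by
    have : ((x^n * (x-2) : ℝ) : ℂ) = (a:ℂ) := by exact_mod_cast congrArg (Complex.ofReal) hxa
    push_cast at this
    exact this
  have hxroot : ((x:ℂ)) ∈ p.roots := by
    rw [mem_roots hp0]
    rw [hp]
    simp only [IsRoot, eval_sub, eval_mul, eval_pow, eval_C, eval_X]
    linear_combination hxC
  have hxabs : Complex.abs (x:ℂ) = x := by
    rw [Complex.abs_ofReal, abs_of_pos (by linarith)]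
  -- x is a simple root
  have hcount : p.roots.count (x:ℂ) = 1 := by
    rw [count_roots]
    have h1 : 1 ≤ p.rootMultiplicity (x:ℂ) :=
      (rootMultiplicity_pos hp0).mpr (isRoot_of_mem_roots hxroot)
    have h2 : p.rootMultiplicity (x:ℂ) ≤ 1 := by
      by_contra hcon
      push_neg at hcon
      have hder := isRoot_iterate_derivative_of_lt_rootMultiplicity (n := 1) hcon
      rw [Function.iterate_one] at hder
      rw [hp] at hder
      simp only [IsRoot, derivative_sub, derivative_C, derivative_C_mul, derivative_X_pow,
        eval_sub, eval_mul, eval_pow, eval_C, eval_X, eval_natCast, eval_mul,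
        sub_zero] at hder
      have hderR : ((n:ℝ)+1) * x^n - 2*((n:ℝ)*x^(n-1)) = 0 := by
        have h2 : (((n:ℕ)+1 : ℕ) : ℂ) * (x:ℂ)^(n+1-1) - 2*((n:ℂ) * (x:ℂ)^(n-1)) = 0 := hder
        rw [Nat.add_sub_cancel] at h2
        exact_mod_cast h2
      have hxn : (19/10:ℝ)^n ≤ x^n := pow_le_pow_left₀ (by norm_num) hx19 n
      have hxn1 : (n:ℝ)+1 < x^n := lt_of_lt_of_le (L4 n hn) hxn
      have hanb : -2 ≤ a := by
        have := neg_abs_le a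
        rw [ha] at this
        linarith
      have key2 : 2*(n:ℝ) < ((n:ℝ)+1)*x := by
        nlinarith [hxa, hxn1, hanb, hx19, hN]
      have hxp : (0:ℝ) < x^(n-1) := pow_pos (by linarith) _
      have hxe : x^n = x^(n-1)*x := by
        rw [← pow_succ]; congr 1; omega
      rw [hxe] at hderR
      nlinarith [hderR, key2, hxp]
    omega
  -- counting
  have hr7 : 1 + 1/(n:ℝ) ≤ 7/6 := by
    have : 1/(n:ℝ) ≤ 1/6 := by
      apply div_le_div_of_nonneg_left (by norm_num) (by norm_num) hN
    linarith
  have hsplit : (p.roots.filter (fun z => Complex.abs z < 1 + 1/(n:ℝ))).card + (p.roots.filter (fun z => ¬ (Complex.abs z < 1 + 1/(n:ℝ)))).card = n+1 := by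
    rw [← Multiset.card_add, Multiset.filter_add_not]
    exact hcard
  have hone : (p.roots.filter (fun z => ¬ (Complex.abs z < 1 + 1/(n:ℝ)))).card = 1 := by
    have hall : ∀ z ∈ p.roots.filter (fun z => ¬ (Complex.abs z < 1 + 1/(n:ℝ))), z = (x:ℂ) := by
      intro z hzmem
      rw [Multiset.mem_filter] at hzmem
      obtain ⟨hzr, hznP⟩ := hzmem
      have hz19 : (19/10:ℝ) ≤ Complex.abs z :=
        large_root n hn (habs_eq z hzr) (not_lt.mp hznP)
      have hx19' : (19/10:ℝ) ≤ Complex.abs (x:ℂ) := by rw [hxabs]; exact hx19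
      exact root_unique n hn haC (hroot_eq z hzr) hxC hz19 hx19'
    have hrep := Multiset.eq_replicate_card.mpr hall
    have hxin : (x:ℂ) ∈ p.roots.filter (fun z => ¬ (Complex.abs z < 1 + 1/(n:ℝ))) := by
      rw [Multiset.mem_filter]
      refine ⟨hxroot, ?_⟩
      show ¬ (Complex.abs (x:ℂ) < 1 + 1/(n:ℝ))
      rw [not_lt, hxabs]
      linarith
    have hle : (p.roots.filter (fun z => ¬ (Complex.abs z < 1 + 1/(n:ℝ)))).count (x:ℂ) ≤ 1 := by
      rw [← hcount]
      exact Multiset.count_le_of_le _ (Multiset.filter_le _ _)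
    have hcnt : (p.roots.filter (fun z => ¬ (Complex.abs z < 1 + 1/(n:ℝ)))).count (x:ℂ)
        = (p.roots.filter (fun z => ¬ (Complex.abs z < 1 + 1/(n:ℝ)))).card := by
      conv_lhs => rw [hrep]
      rw [Multiset.count_replicate_self]
    have hge : 1 ≤ (p.roots.filter (fun z => ¬ (Complex.abs z < 1 + 1/(n:ℝ)))).count (x:ℂ) :=
      Multiset.one_le_count_iff_mem.mpr hxin
    omega
  omega

open scoped Classical in
/-- For every `n ≥ 6`, each of `f_n = X^{n+1} - 2X^n - 2` and `g_n = X^{n+1} - 2X^n + 2`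
has exactly `n` complex roots, counted with multiplicity, in the open disk
`{z : |z| < 1 + 1/n}`. -/
theorem f_g_roots_in_disk_count (n : ℕ) (hn : 6 ≤ n) :
    (((X ^ (n + 1) - C 2 * X ^ n - C 2 : ℂ[X]).roots.filter
        fun z => ‖z‖ < 1 + 1/n).card = n) ∧
    (((X ^ (n + 1) - C 2 * X ^ n + C 2 : ℂ[X]).roots.filter
        fun z => ‖z‖ < 1 + 1/n).card = n) := by
  have hN : (6:ℝ) ≤ (n:ℝ) := by exact_mod_cast hn
  have hcontF : Continuous (fun t : ℝ => t^n * (t - 2)) :=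
    (continuous_pow n).mul (continuous_id.sub continuous_const)
  constructor
  · -- f, a = 2, real root in [2,3]
    obtain ⟨x, hxmem, hxval⟩ : ∃ x ∈ Set.Icc (2:ℝ) 3, x^n*(x-2) = 2 := by
      have hsub := intermediate_value_Icc (by norm_num : (2:ℝ) ≤ 3) hcontF.continuousOn
      have h2 : (2:ℝ) ∈ Set.Icc ((2:ℝ)^n*((2:ℝ)-2)) ((3:ℝ)^n*((3:ℝ)-2)) := by
        constructor
        · norm_num
        · have : (2:ℝ) ≤ 3^n := by
            calc (2:ℝ) ≤ 3^1 := by norm_num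
              _ ≤ 3^n := pow_le_pow_right₀ (by norm_num) (by omega)
          nlinarith
      obtain ⟨x, hx1, hx2⟩ := hsub h2
      exact ⟨x, hx1, hx2⟩
    have := key n hn 2 (by norm_num) x (by linarith [hxmem.1]) hxval
    simpa [Complex.abs_apply] using this
  · -- g, a = -2, real root in [1.9, 2]
    obtain ⟨x, hxmem, hxval⟩ : ∃ x ∈ Set.Icc (19/10:ℝ) 2, x^n*(x-2) = -2 := by
      have hsub := intermediate_value_Icc (by norm_num : (19/10:ℝ) ≤ 2) hcontF.continuousOn
      have h2 : (-2:ℝ) ∈ Set.Icc ((19/10:ℝ)^n*((19/10:ℝ)-2)) ((2:ℝ)^n*((2:ℝ)-2)) := by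
        constructor
        · have h20 := L3 n hn
          nlinarith
        · norm_num
      obtain ⟨x, hx1, hx2⟩ := hsub h2
      exact ⟨x, hx1, hx2⟩
    have := key n hn (-2) (by norm_num) x hxmem.1 hxval
    have he : (X ^ (n + 1) - C 2 * X ^ n + C 2 : ℂ[X])
        = X ^ (n + 1) - C 2 * X ^ n - C ((-2:ℝ):ℂ) := by
      rw [show ((-2:ℝ):ℂ) = -2 by norm_num, map_neg]
      ring
    rw [he]
    exact this
end

section
/- For every integer n ≥ 6, there is a unique real number r_n with 2^{−n} < r_n < 2^{−n} + 2n·4^{−n} and g_n(2 − 2r_n) = 0, and moreover r_n / κ_n → 1 as n → ∞ (that is, r_n is asymptotically equivalent to κ_n). -/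
/-!
Substituting `x = 2 - 2r` turns `g_n(x) = 0` into `r (1 - r)^n = 2^{-n}`. The map
`r ↦ r (1 - r)^n` is increasing on `[0, 1/(n+1)]`; it lies below `2^{-n}` at `r = 2^{-n}` and,
by Bernoulli's inequality, above it at `r = 2^{-n} + 2n 4^{-n}` as soon as `n 2^{-n} ≤ 1/10`,
so the intermediate value theorem gives the unique root. For the asymptotics, `r_n 2^n` and
`κ_n 2^n = (1 + κ_n)^{-n}` both lie within `O(n 2^{-n})` of `1`.
-/

open Polynomial Filter Topology Set

theorem ten_mul_le_two_pow {n : ℕ} (hn : 6 ≤ n) : 10 * n ≤ 2 ^ n := by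
  induction n, hn using Nat.le_induction with
  | base => norm_num
  | succ k _ ih => rw [pow_succ]; omega

theorem one_sub_mul_le_inv_one_add_pow {x : ℝ} (hx : 0 ≤ x) (n : ℕ) :
    1 - n * x ≤ ((1 + x) ^ n)⁻¹ := by
  have hx1 : 0 < 1 + x := by linarith
  have hinv : (1 + x)⁻¹ - 1 = -(x / (1 + x)) := by field_simp; ring
  have hdiv : x / (1 + x) ≤ x := div_le_self hx (by linarith)
  calc 1 - n * x ≤ 1 + n * ((1 + x)⁻¹ - 1) := by
        rw [hinv]; nlinarith [Nat.cast_nonneg (α := ℝ) n]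
    _ ≤ ((1 + x)⁻¹) ^ n := one_add_mul_sub_le_pow (by linarith [inv_pos.2 hx1]) n
    _ = ((1 + x) ^ n)⁻¹ := inv_pow _ _

theorem existsUnique_mem_Ioo_eq_of_strictMonoOn {f : ℝ → ℝ} {a b c : ℝ} (hab : a ≤ b)
    (hf : ContinuousOn f (Icc a b)) (hmono : StrictMonoOn f (Icc a b))
    (ha : f a < c) (hb : c < f b) : ∃! x, x ∈ Ioo a b ∧ f x = c := by
  obtain ⟨x, hx, rfl⟩ := intermediate_value_Ioo hab hf ⟨ha, hb⟩
  exact ⟨x, ⟨hx, rfl⟩, fun y ⟨hy, hyx⟩ =>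
    hmono.injOn (Ioo_subset_Icc_self hy) (Ioo_subset_Icc_self hx) hyx⟩

theorem strictMonoOn_mul_one_sub_pow (n : ℕ) :
    StrictMonoOn (fun x : ℝ => x * (1 - x) ^ n) (Icc 0 (1 / (n + 1))) := by
  refine strictMonoOn_of_deriv_pos (convex_Icc _ _) (by fun_prop) fun x hx => ?_
  rw [interior_Icc] at hx
  obtain ⟨hx0, hx1⟩ := hx
  have hxn : (n + 1) * x < 1 := by rwa [lt_div_iff₀ (by positivity), mul_comm] at hx1
  have hderiv : HasDerivAt (fun x : ℝ => x * (1 - x) ^ n)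
      ((1 - x) ^ n - x * (n * (1 - x) ^ (n - 1))) x :=
    ((hasDerivAt_id' x).fun_mul (((hasDerivAt_id' x).const_sub 1).fun_pow n)).congr_deriv
      (by ring)
  rw [hderiv.deriv]
  rcases n with _ | m
  · simp
  · have h1x : 0 < 1 - x := by push_cast at hxn; nlinarith
    have : (1 - x) ^ (m + 1) - x * ((m + 1 : ℕ) * (1 - x) ^ m)
        = (1 - x) ^ m * (1 - (m + 2) * x) := by push_cast; ring
    simp only [Nat.add_sub_cancel, this]
    push_cast at hxn
    exact mul_pos (pow_pos h1x m) (by linarith)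

section
variable {n : ℕ} {t : ℝ}

theorem mul_one_sub_pow_lt_self (hn : n ≠ 0) (ht0 : 0 < t) (ht1 : t < 1) : t * (1 - t) ^ n < t :=
  mul_lt_of_lt_one_right ht0 (pow_lt_one₀ (by linarith) (by linarith) hn)

theorem lt_mul_one_sub_pow_add_two_mul_sq (hn : 1 ≤ n) (ht : 0 < t) (hnt : n * t ≤ 1 / 10) :
    t < (t + 2 * n * t ^ 2) * (1 - (t + 2 * n * t ^ 2)) ^ n := by
  have hn' : (1 : ℝ) ≤ n := by exact_mod_cast hn
  have htu : t ≤ n * t := le_mul_of_one_le_left ht.le hn'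
  have hbern := one_add_mul_le_pow (a := -(t + 2 * n * t ^ 2)) (by nlinarith) n
  calc t < t * ((1 + 2 * (n * t)) * (1 - n * t - 2 * (n * t) ^ 2)) := by
        refine lt_mul_of_one_lt_right ht ?_
        nlinarith
    _ = (t + 2 * n * t ^ 2) * (1 + n * -(t + 2 * n * t ^ 2)) := by ring
    _ ≤ (t + 2 * n * t ^ 2) * (1 + -(t + 2 * n * t ^ 2)) ^ n :=
        mul_le_mul_of_nonneg_left hbern (by positivity)
    _ = _ := by ring

theorem add_two_mul_sq_le_inv_succ (hn : 1 ≤ n) (ht : 0 < t) (hnt : n * t ≤ 1 / 10) :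
    t + 2 * n * t ^ 2 ≤ 1 / (n + 1) := by
  have hn' : (1 : ℝ) ≤ n := by exact_mod_cast hn
  have htu : t ≤ n * t := le_mul_of_one_le_left ht.le hn'
  rw [le_div_iff₀ (by positivity)]
  nlinarith

theorem existsUnique_mul_one_sub_pow_eq (hn : 1 ≤ n) (ht : 0 < t) (hnt : n * t ≤ 1 / 10) :
    ∃! x : ℝ, (t < x ∧ x < t + 2 * n * t ^ 2) ∧ x * (1 - x) ^ n = t := by
  have hb := add_two_mul_sq_le_inv_succ hn ht hnt
  have hbt : t < 1 := by
    have hn' : (1 : ℝ) ≤ n := by exact_mod_cast hn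
    nlinarith
  exact existsUnique_mem_Ioo_eq_of_strictMonoOn (le_add_of_nonneg_right (by positivity))
    (by fun_prop) ((strictMonoOn_mul_one_sub_pow n).mono (Icc_subset_Icc ht.le hb))
    (mul_one_sub_pow_lt_self (by omega) ht hbt) (lt_mul_one_sub_pow_add_two_mul_sq hn ht hnt)

end

theorem eval_g_eq_zero_iff (n : ℕ) (r : ℝ) :
    eval (2 - 2 * r) (X ^ (n + 1) - C 2 * X ^ n + C 2 : ℝ[X]) = 0 ↔
      r * (1 - r) ^ n = 1 / 2 ^ n := by
  have h : eval (2 - 2 * r) (X ^ (n + 1) - C 2 * X ^ n + C 2 : ℝ[X])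
      = 2 * (1 - 2 ^ n * (r * (1 - r) ^ n)) := by
    simp only [eval_add, eval_sub, eval_mul, eval_pow, eval_X, eval_C,
      show 2 - 2 * r = 2 * (1 - r) by ring, mul_pow]
    ring
  rw [h, eq_div_iff (by positivity)]
  constructor <;> intro h <;> linarith

theorem tendsto_nhds_one_of_abs_sub_one_le {a : ℕ → ℝ} {C : ℝ}
    (h : ∀ᶠ n in atTop, |a n - 1| ≤ C * (n / 2 ^ n)) : Tendsto a atTop (𝓝 1) := by
  have hlim : Tendsto (fun n : ℕ => C * (n / 2 ^ n)) atTop (𝓝 0) := by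
    simpa [div_eq_mul_inv] using
      (tendsto_self_mul_const_pow_of_lt_one (r := 1 / 2) (by norm_num) (by norm_num)).const_mul C
  refine tendsto_iff_norm_sub_tendsto_zero.2 (squeeze_zero_norm' ?_ hlim)
  simpa only [Real.norm_eq_abs, abs_abs] using h

theorem abs_mul_two_pow_sub_one_le_of_mem_Ioo {n : ℕ} {r : ℝ} (h1 : 1 / 2 ^ n < r)
    (h2 : r < 1 / 2 ^ n + 2 * n / 4 ^ n) : |r * 2 ^ n - 1| ≤ 2 * (n / 2 ^ n) := by
  have h2n : (0 : ℝ) < 2 ^ n := by positivity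
  have h4 : (4 : ℝ) ^ n = 2 ^ n * 2 ^ n := by rw [← mul_pow]; norm_num
  rw [h4] at h2
  rw [abs_le]
  constructor
  · have := (div_lt_iff₀ h2n).1 h1
    have : 0 ≤ 2 * (n / 2 ^ n : ℝ) := by positivity
    linarith
  · have : r * 2 ^ n < 1 + 2 * (n / 2 ^ n) := by
      calc r * 2 ^ n < (1 / 2 ^ n + 2 * n / (2 ^ n * 2 ^ n)) * 2 ^ n :=
            mul_lt_mul_of_pos_right h2 h2n
        _ = _ := by field_simp
    linarith

theorem abs_mul_two_pow_sub_one_le_of_pow_mul_eq_one {n : ℕ} {κ : ℝ} (h0 : 0 ≤ κ)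
    (h : (2 + 2 * κ) ^ n * κ = 1) : |κ * 2 ^ n - 1| ≤ n / 2 ^ n := by
  have h2n : (0 : ℝ) < 2 ^ n := by positivity
  have hprod : κ * 2 ^ n = ((1 + κ) ^ n)⁻¹ := by
    refine eq_inv_of_mul_eq_one_left ?_
    rw [show 2 + 2 * κ = 2 * (1 + κ) by ring, mul_pow] at h
    linear_combination h
  have hle : κ * 2 ^ n ≤ 1 := hprod ▸ inv_le_one_of_one_le₀ (one_le_pow₀ (by linarith))
  have hκ : κ ≤ 1 / 2 ^ n := by rwa [le_div_iff₀ h2n]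
  have hlow := one_sub_mul_le_inv_one_add_pow h0 n
  rw [← hprod] at hlow
  rw [abs_sub_comm, abs_of_nonneg (by linarith)]
  calc 1 - κ * 2 ^ n ≤ n * κ := by linarith
    _ ≤ n * (1 / 2 ^ n) := mul_le_mul_of_nonneg_left hκ n.cast_nonneg
    _ = n / 2 ^ n := by ring

/-- For `n ≥ 6`, there is a unique real `r_n` with `2^{-n} < r_n < 2^{-n} + 2n·4^{-n}`
and `g_n(2 - 2r_n) = 0`; moreover `r_n / κ_n → 1`, where `κ_n` is the unique
`κ ∈ (0,1/2)` with `(2+2κ)^n κ = 1`. -/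
theorem g_root_unique_and_asymptotic (κ : ℕ → ℝ)
    (hκ : ∀ n : ℕ, 1 ≤ n → κ n ∈ Set.Ioo (0 : ℝ) (1/2) ∧ (2 + 2*κ n)^n * κ n = 1) :
    (∀ n : ℕ, 6 ≤ n → ∃! r : ℝ,
      (1/2^n < r ∧ r < 1/2^n + 2*n/4^n) ∧
      Polynomial.eval (2 - 2*r) (X ^ (n + 1) - C 2 * X ^ n + C 2 : ℝ[X]) = 0) ∧
    (∀ r : ℕ → ℝ,
      (∀ n : ℕ, 6 ≤ n →
        (1/2^n < r n ∧ r n < 1/2^n + 2*n/4^n) ∧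
        Polynomial.eval (2 - 2*r n) (X ^ (n + 1) - C 2 * X ^ n + C 2 : ℝ[X]) = 0) →
      Tendsto (fun n : ℕ => r n / κ n) atTop (𝓝 1)) := by
  refine ⟨fun n hn => ?_, fun r hr => ?_⟩
  · have hnt : (n : ℝ) * (1 / 2 ^ n) ≤ 1 / 10 := by
      have : (10 * n : ℝ) ≤ 2 ^ n := by exact_mod_cast ten_mul_le_two_pow hn
      rw [mul_one_div, div_le_iff₀ (by positivity)]
      linarith
    have h4 : (2 * n / 4 ^ n : ℝ) = 2 * n * (1 / 2 ^ n) ^ 2 := by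
      rw [show (4 : ℝ) ^ n = (2 ^ n) ^ 2 by rw [← pow_mul, mul_comm, pow_mul]; norm_num]
      field_simp
    simpa only [eval_g_eq_zero_iff, h4] using
      existsUnique_mul_one_sub_pow_eq (by omega) (by positivity) hnt
  · have hr2 : Tendsto (fun n => r n * 2 ^ n) atTop (𝓝 1) :=
      tendsto_nhds_one_of_abs_sub_one_le <| (eventually_ge_atTop 6).mono fun n hn =>
        abs_mul_two_pow_sub_one_le_of_mem_Ioo (hr n hn).1.1 (hr n hn).1.2
    have hκ2 : Tendsto (fun n => κ n * 2 ^ n) atTop (𝓝 1) :=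
      tendsto_nhds_one_of_abs_sub_one_le <| (eventually_ge_atTop 1).mono fun n hn =>
        abs_mul_two_pow_sub_one_le_of_pow_mul_eq_one (hκ n hn).1.1.le (hκ n hn).2
          |>.trans_eq (one_mul _).symm
    have := (hr2.div hκ2 one_ne_zero).congr fun n =>
      mul_div_mul_right (r n) (κ n) (pow_ne_zero n two_ne_zero)
    rwa [div_one] at this
end

section
/- For n ≥ 6, let r_n be the unique real number with 2^{−n} < r_n < 2^{−n} + 2n·4^{−n} and g_n(2 − 2r_n) = 0. Then the ratio (2 − 2r_n)/(2 + 2κ_n) equals 1 − 2κ_n + o(κ_n) as n → ∞; precisely, the limit as n → ∞ of (1 − (2 − 2r_n)/(2 + 2κ_n)) / κ_n equals 2. -/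
/-!
Both `κ n` and `r n` are asymptotic to `2⁻ⁿ`. For `κ n` this follows from
`κ n * 2ⁿ = (1 + κ n)⁻ⁿ`, where `1 ≤ (1 + κ n)ⁿ ≤ exp (n κ n) ≤ exp (n 2⁻ⁿ) → 1`; for `r n`
it is read off from the given bounds. Then `(1 - (2 - 2r)/(2 + 2κ))/κ = (1 + r/κ)/(1 + κ) → 2`.
-/

open Polynomial Filter Topology

theorem tendsto_one_add_pow_of_le_inv_pow {c : ℝ} (hc : 1 < c) {x : ℕ → ℝ}
    (hx : ∀ᶠ n in atTop, 0 ≤ x n ∧ x n ≤ (c ^ n)⁻¹) :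
    Tendsto (fun n => (1 + x n) ^ n) atTop (𝓝 1) := by
  have hnc : Tendsto (fun n : ℕ => (n : ℝ) * c⁻¹ ^ n) atTop (𝓝 0) :=
    tendsto_self_mul_const_pow_of_lt_one (by positivity) (inv_lt_one_of_one_lt₀ hc)
  have hexp : Tendsto (fun n : ℕ => Real.exp (n * c⁻¹ ^ n)) atTop (𝓝 1) := by
    simpa [Function.comp_def] using (Real.continuous_exp.tendsto 0).comp hnc
  refine tendsto_of_tendsto_of_tendsto_of_le_of_le' tendsto_const_nhds hexp ?_ ?_
  · filter_upwards [hx] with n hn using one_le_pow₀ (by linarith [hn.1])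
  · filter_upwards [hx] with n ⟨hn0, hn⟩
    calc (1 + x n) ^ n ≤ Real.exp (x n) ^ n := by
          gcongr; linarith [Real.add_one_le_exp (x n)]
      _ = Real.exp (n * x n) := (Real.exp_nat_mul _ _).symm
      _ ≤ Real.exp (n * c⁻¹ ^ n) := by rw [inv_pow]; gcongr

theorem tendsto_mul_pow_of_add_mul_pow_mul_eq_one {c : ℝ} (hc : 1 < c) {κ : ℕ → ℝ}
    (hκ : ∀ᶠ n in atTop, 0 < κ n ∧ (c + c * κ n) ^ n * κ n = 1) :
    Tendsto (fun n => κ n * c ^ n) atTop (𝓝 1) := by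
  have hc0 : 0 < c := by linarith
  have hfactor : ∀ n, (c + c * κ n) ^ n * κ n = κ n * c ^ n * (1 + κ n) ^ n := fun n => by
    rw [show c + c * κ n = c * (1 + κ n) by ring, mul_pow]; ring
  have hsmall : ∀ᶠ n in atTop, 0 ≤ κ n ∧ κ n ≤ (c ^ n)⁻¹ := by
    filter_upwards [hκ] with n ⟨hpos, heq⟩
    refine ⟨hpos.le, ?_⟩
    rw [← one_div, le_div_iff₀ (by positivity)]
    have : 1 ≤ (1 + κ n) ^ n := one_le_pow₀ (by linarith)
    nlinarith [hfactor n, pow_pos hc0 n]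
  have := (tendsto_one_add_pow_of_le_inv_pow hc hsmall).inv₀ one_ne_zero
  rw [inv_one] at this
  refine this.congr' ?_
  filter_upwards [hκ] with n ⟨hpos, heq⟩
  rw [hfactor] at heq
  exact (eq_inv_of_mul_eq_one_left heq).symm

theorem tendsto_mul_two_pow_of_mem_Ioo {r : ℕ → ℝ}
    (hr : ∀ᶠ n in atTop, 1 / 2 ^ n < r n ∧ r n < 1 / 2 ^ n + 2 * n / 4 ^ n) :
    Tendsto (fun n => r n * 2 ^ n) atTop (𝓝 1) := by
  have hn2 : Tendsto (fun n : ℕ => 1 + 2 * ((n : ℝ) * 2⁻¹ ^ n)) atTop (𝓝 1) := by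
    simpa using ((tendsto_self_mul_const_pow_of_lt_one (r := (2 : ℝ)⁻¹) (by norm_num)
      (by norm_num)).const_mul 2).const_add 1
  refine tendsto_of_tendsto_of_tendsto_of_le_of_le' tendsto_const_nhds hn2 ?_ ?_
  · filter_upwards [hr] with n ⟨hlow, _⟩
    rw [div_lt_iff₀ (by positivity)] at hlow
    exact hlow.le
  · filter_upwards [hr] with n ⟨_, hup⟩
    have h4 : (4 : ℝ) ^ n = 2 ^ n * 2 ^ n := by rw [← mul_pow]; norm_num
    calc r n * 2 ^ n ≤ (1 / 2 ^ n + 2 * n / 4 ^ n) * 2 ^ n := by gcongr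
      _ = 1 + 2 * ((n : ℝ) * 2⁻¹ ^ n) := by rw [h4, inv_pow]; field_simp

theorem tendsto_one_sub_div_div_of_tendsto {κ r : ℕ → ℝ} (hκ : Tendsto κ atTop (𝓝 0))
    (hκ0 : ∀ᶠ n in atTop, 0 < κ n) (hrκ : Tendsto (fun n => r n / κ n) atTop (𝓝 1)) :
    Tendsto (fun n => (1 - (2 - 2 * r n) / (2 + 2 * κ n)) / κ n) atTop (𝓝 2) := by
  have : Tendsto (fun n => (1 + r n / κ n) / (1 + κ n)) atTop (𝓝 ((1 + 1) / (1 + 0))) :=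
    (hrκ.const_add 1).div (hκ.const_add 1) (by norm_num)
  norm_num at this
  refine this.congr' ?_
  filter_upwards [hκ0] with n hn
  have : 0 < 1 + κ n := by linarith
  field_simp
  ring

/-- For `n ≥ 6`, let `r_n` be the unique real with `2^{-n} < r_n < 2^{-n} + 2n·4^{-n}`
and `g_n(2 - 2r_n) = 0`, and let `κ_n` be the unique `κ ∈ (0,1/2)` with
`(2+2κ)^n κ = 1`.  Then `(1 - (2 - 2r_n)/(2 + 2κ_n)) / κ_n → 2` as `n → ∞`,
i.e. `(2 - 2r_n)/(2 + 2κ_n) = 1 - 2κ_n + o(κ_n)`. -/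
theorem second_eigenvalue_asymptotic (κ r : ℕ → ℝ)
    (hκ : ∀ n : ℕ, 1 ≤ n → κ n ∈ Set.Ioo (0 : ℝ) (1/2) ∧ (2 + 2*κ n)^n * κ n = 1)
    (hr : ∀ n : ℕ, 6 ≤ n →
      (1/2^n < r n ∧ r n < 1/2^n + 2*n/4^n) ∧
      Polynomial.eval (2 - 2*r n) (X ^ (n + 1) - C 2 * X ^ n + C 2 : ℝ[X]) = 0) :
    Tendsto (fun n : ℕ => (1 - (2 - 2*r n)/(2 + 2*κ n)) / κ n) atTop (𝓝 2) := by
  have hκ' : ∀ᶠ n in atTop, 0 < κ n ∧ (2 + 2 * κ n) ^ n * κ n = 1 := by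
    filter_upwards [eventually_ge_atTop 1] with n hn using ⟨(hκ n hn).1.1, (hκ n hn).2⟩
  have hκ2 : Tendsto (fun n => κ n * 2 ^ n) atTop (𝓝 1) :=
    tendsto_mul_pow_of_add_mul_pow_mul_eq_one one_lt_two hκ'
  have hr2 : Tendsto (fun n => r n * 2 ^ n) atTop (𝓝 1) :=
    tendsto_mul_two_pow_of_mem_Ioo <| by
      filter_upwards [eventually_ge_atTop 6] with n hn using (hr n hn).1
  have hκ0 : Tendsto κ atTop (𝓝 0) := by
    have := hκ2.mul (tendsto_pow_atTop_nhds_zero_of_lt_one (r := (2 : ℝ)⁻¹) (by norm_num)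
      (by norm_num))
    rw [one_mul] at this
    refine this.congr fun n => ?_
    rw [inv_pow, mul_assoc, mul_inv_cancel₀ (by positivity), mul_one]
  have hrκ : Tendsto (fun n => r n / κ n) atTop (𝓝 1) := by
    have : Tendsto (fun n => r n * 2 ^ n / (κ n * 2 ^ n)) atTop (𝓝 (1 / 1)) :=
      hr2.div hκ2 one_ne_zero
    rw [div_one] at this
    exact this.congr fun n => mul_div_mul_right _ _ (by positivity)
  exact tendsto_one_sub_div_div_of_tendsto hκ0 (hκ'.mono fun _ h => h.1) hrκ
end

section
/- For every integer n ≥ 1, the matrices A_n and J_n commute (A_n J_n = J_n A_n), and A_n satisfies the relation A_n (A_n^{n+1} − 2 A_n^n − 2 J_n) = 0. -/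
open Matrix

/-- The paired tent map `T_κ : [-1,1] → [-1,1]`. -/
noncomputable def pairedTent (κ : ℝ) (x : ℝ) : ℝ :=
  if x ≤ -(1/2) then 2*(1+κ)*(x+1) - 1
  else if x < 0 then -(2*(1+κ))*x - 1
  else if x = 0 then 0
  else if x ≤ 1/2 then -(2*(1+κ))*x + 1
  else 2*(1+κ)*(x-1) + 1

/-- The partition points `p_0 < ⋯ < p_{2n+4}` of the Markov partition for `T_{κ_n}`. -/
noncomputable def markovPoint (n : ℕ) (κ : ℝ) (i : ℕ) : ℝ :=
  if i = 0 then -1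
  else if i < n then (2 + 2*κ)^i * κ - 1
  else if i = n then -(1/2)
  else if i = n + 1 then -κ
  else if i = n + 2 then 0
  else if i = n + 3 then κ
  else if i = n + 4 then 1/2
  else if i < 2*n + 4 then 1 - (2 + 2*κ)^(2*n + 4 - i) * κ
  else 1

/-- The interval `R_i = (p_{i-1}, p_i)`, for `1 ≤ i ≤ 2n+4`. -/
noncomputable def markovInterval (n : ℕ) (κ : ℝ) (i : ℕ) : Set ℝ :=
  Set.Ioo (markovPoint n κ (i - 1)) (markovPoint n κ i)

open scoped Classical in
/-- The `(2n+4) × (2n+4)` adjacency matrix `A_n`: the `(i,j)` entry (1-based) is `1`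
if `R_i ⊆ T_n(R_j)` and `0` otherwise. -/
noncomputable def Amat (n : ℕ) (κ : ℝ) : Matrix (Fin (2*n + 4)) (Fin (2*n + 4)) ℂ :=
  Matrix.of fun i j =>
    if markovInterval n κ ((i : ℕ) + 1) ⊆ pairedTent κ '' markovInterval n κ ((j : ℕ) + 1)
    then 1 else 0

/-- The `(2n+4) × (2n+4)` exchange matrix `J_n`: entry `(i,j)` (1-based) is `1` iff
`i + j = 2n+5`. -/
def Jmat (n : ℕ) : Matrix (Fin (2*n + 4)) (Fin (2*n + 4)) ℂ :=
  Matrix.of fun i j => if (i : ℕ) + 1 + ((j : ℕ) + 1) = 2*n + 5 then 1 else 0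

/-!
`T_κ` is odd and `p_{2n+4-i} = -p_i`, so `A_n` is invariant under the index reversal
`i ↦ 2n+5-i`, which is `A_n J_n = J_n A_n`.

For the relation write `χ(I)` for the indicator vector of the `R_i` contained in an interval `I`
with endpoints among the `p_i`. Both laps of `T` on `[-1, 0]` are affine, so `A_n χ(I) = χ(T I)`
when `I` lies in one lap. Put `c = χ(-1, T(-κ))` and `u = χ(-1, κ)`. The orbit
`T^k(-κ) = (2+2κ)^k κ - 1` stays in the first lap and reaches `0` at `k = n`, whence
`A^{n-1} c = χ(-1, 0)`; each lap of `(-1, 0)` covers `(-1, κ)`, whence `A^n c = 2u`; and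
`A u = 2u + J c` since `(0, κ)` mirrors `(-κ, 0)`. These three identities make
`A (A^{n+1} - 2A^n - 2J)` vanish on `c` and on `χ(-1/2, -κ)`, which `A` maps to `u - c`. Its
kernel is invariant under `A` and `J`, and the images of these two vectors under `A`, `J` span
everything.
-/

section Relation

variable {R V : Type*} [Ring R] [AddCommGroup V] [Module R V]

def tentRelation (f g : Module.End R V) (n : ℕ) : Module.End R V :=
  f * (f ^ (n + 1) - 2 * f ^ n - 2 * g)

variable {f g : Module.End R V} {n : ℕ}

lemma tentRelation_apply (x : V) :
    tentRelation f g n x = f (f ((f ^ n) x)) - 2 • f ((f ^ n) x) - 2 • f (g x) := by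
  simp only [tentRelation, Module.End.mul_apply, LinearMap.sub_apply, Module.End.ofNat_apply,
    pow_succ', map_sub, map_nsmul]

lemma tentRelation_apply_eq_zero_of_pow_apply {c u : V} (hc : (f ^ n) c = 2 • u)
    (hu : f u = 2 • u + g c) : tentRelation f g n c = 0 := by
  simp only [tentRelation_apply, hc, map_nsmul, hu, map_add]
  module

lemma tentRelation_apply_eq_zero_of_apply_eq_sub (hfg : Commute f g) {c u e : V}
    (hc : (f ^ n) c = 2 • u) (hu : f u = 2 • u + g c) (he : f e = u - c) :
    tentRelation f g n e = 0 := by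
  have hfn (x : V) : f ((f ^ n) x) = (f ^ n) (f x) := by
    rw [← Module.End.mul_apply, ← pow_succ', pow_succ, Module.End.mul_apply]
  have hgn (x : V) : (f ^ n) (g x) = g ((f ^ n) x) := by
    rw [← Module.End.mul_apply, (hfg.pow_left n).eq, Module.End.mul_apply]
  have hfg' : f (g e) = g (f e) := by rw [← Module.End.mul_apply, hfg.eq, Module.End.mul_apply]
  rw [tentRelation_apply, hfn e, he, hfg', he]
  simp only [map_sub, hc, hfn, hu, map_add, map_nsmul, hgn]
  module

lemma commute_tentRelation {h : Module.End R V} (hf : Commute h f) (hg : Commute h g) :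
    Commute h (tentRelation f g n) :=
  hf.mul_right (((hf.pow_right _).sub_right ((Commute.ofNat_left 2 h).symm.mul_right
    (hf.pow_right _))).sub_right ((Commute.ofNat_left 2 h).symm.mul_right hg))

lemma apply_mem_ker_tentRelation {h : Module.End R V} (hf : Commute h f) (hg : Commute h g)
    {x : V} (hx : x ∈ LinearMap.ker (tentRelation f g n)) :
    h x ∈ LinearMap.ker (tentRelation f g n) := by
  rw [LinearMap.mem_ker] at hx ⊢
  rw [← Module.End.mul_apply, ← (commute_tentRelation hf hg).eq, Module.End.mul_apply, hx,
    map_zero]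

end Relation

lemma commute_permMatrix_of_apply_apply {ι R : Type*} [Fintype ι] [DecidableEq ι] [Semiring R]
    {M : Matrix ι ι R} (σ : Equiv.Perm ι) (hM : ∀ i j, M (σ i) (σ j) = M i j) :
    Commute M (σ.permMatrix R) := by
  rw [Commute, SemiconjBy, Equiv.Perm.permMatrix, PEquiv.mul_toMatrix_toPEquiv,
    PEquiv.toMatrix_toPEquiv_mul]
  ext i j
  simpa using (hM i (σ.symm j)).symm

/-- With 0-based indices, `intervalVec a b` is the vector of
`R_{a+1} ∪ ⋯ ∪ R_b = (p_a, p_b)`. -/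
def intervalVec {N : ℕ} (a b : ℕ) : Fin N → ℂ :=
  fun i => if a ≤ (i : ℕ) ∧ (i : ℕ) < b then 1 else 0

section IntervalVec

variable {N : ℕ}

lemma intervalVec_self (a : ℕ) : intervalVec (N := N) a a = 0 := by
  ext i; simp [intervalVec]

lemma intervalVec_add_intervalVec {a b c : ℕ} (hab : a ≤ b) (hbc : b ≤ c) :
    intervalVec (N := N) a b + intervalVec b c = intervalVec a c := by
  ext i
  simp only [intervalVec, Pi.add_apply]
  split_ifs <;> first | omega | norm_num

lemma intervalVec_eq_sub {a b : ℕ} (hab : a ≤ b) :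
    intervalVec (N := N) a b = intervalVec 0 b - intervalVec 0 a := by
  rw [← intervalVec_add_intervalVec (Nat.zero_le a) hab, add_sub_cancel_left]

lemma intervalVec_zero_eq_sub {a b : ℕ} (hab : a ≤ b) :
    intervalVec (N := N) 0 a = intervalVec 0 b - intervalVec a b := by
  rw [← intervalVec_add_intervalVec (Nat.zero_le a) hab, add_sub_cancel_right]

lemma intervalVec_add_one {i : ℕ} (hi : i < N) :
    intervalVec (N := N) i (i + 1) = Pi.single ⟨i, hi⟩ 1 := by
  ext k
  simp only [intervalVec, Pi.single_apply, Fin.ext_iff]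
  congr 1; apply propext; omega

lemma permMatrix_revPerm_mulVec_intervalVec (a b : ℕ) :
    Fin.revPerm.permMatrix ℂ *ᵥ intervalVec (N := N) a b = intervalVec (N - b) (N - a) := by
  ext i
  simp only [Matrix.permMatrix_mulVec, Function.comp_apply, Fin.revPerm_apply, intervalVec,
    Fin.val_rev]
  congr 1; apply propext; omega

end IntervalVec

section PairedTent

variable {κ : ℝ}

lemma pairedTent_neg (x : ℝ) : pairedTent κ (-x) = -pairedTent κ x := by
  unfold pairedTent
  split_ifs <;> first
    | ring1
    | linarith
    | (obtain rfl : x = 1 / 2 := by linarith); ring1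
    | (obtain rfl : x = -(1 / 2) := by linarith); ring1
    | grind

lemma image_pairedTent_neg (s : Set ℝ) :
    pairedTent κ '' (-s) = -(pairedTent κ '' s) := by
  rw [← Set.image_neg_eq_neg, ← Set.image_neg_eq_neg, Set.image_image, Set.image_image]
  simp only [pairedTent_neg]

lemma pairedTent_of_le_neg_half {x : ℝ} (hx : x ≤ -(1 / 2)) :
    pairedTent κ x = 2 * (1 + κ) * x + (2 * (1 + κ) - 1) := by
  rw [pairedTent, if_pos hx]; ring

lemma image_pairedTent_Ioo_of_le_neg_half (hκ : -1 < κ) {a b : ℝ} (ha : a ≤ -(1 / 2))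
    (hb : b ≤ -(1 / 2)) :
    pairedTent κ '' Set.Ioo a b = Set.Ioo (pairedTent κ a) (pairedTent κ b) := by
  rw [Set.image_congr fun x hx => pairedTent_of_le_neg_half (hx.2.le.trans hb),
    Set.image_affine_Ioo (by linarith), pairedTent_of_le_neg_half ha,
    pairedTent_of_le_neg_half hb]

lemma image_pairedTent_Ioo_of_neg_half_le (hκ : -1 < κ) {a b : ℝ} (ha : -(1 / 2) ≤ a)
    (hb : b ≤ 0) :
    pairedTent κ '' Set.Ioo a b = Set.Ioo (2 * (1 + κ) * -b - 1) (2 * (1 + κ) * -a - 1) := by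
  have hT : Set.EqOn (pairedTent κ) ((2 * (1 + κ) * · + -1) ∘ Neg.neg) (Set.Ioo a b) := by
    intro x hx
    simp only [Function.comp_apply, pairedTent, if_neg (show ¬x ≤ -(1 / 2) by linarith [hx.1]),
      if_pos (show x < 0 by linarith [hx.2])]
    ring
  rw [Set.image_congr hT, Set.image_comp, Set.image_neg_eq_neg, Set.neg_Ioo,
    Set.image_affine_Ioo (by linarith), ← sub_eq_add_neg, ← sub_eq_add_neg]

end PairedTent

section MarkovPoint

variable {n : ℕ} {κ : ℝ}

lemma markovPoint_zero : markovPoint n κ 0 = -1 := rfl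

lemma markovPoint_of_lt {i : ℕ} (hi : 1 ≤ i) (hin : i < n) :
    markovPoint n κ i = (2 + 2 * κ) ^ i * κ - 1 := by
  grind [markovPoint]

lemma markovPoint_self (hn : 1 ≤ n) : markovPoint n κ n = -(1 / 2) := by
  grind [markovPoint]

lemma markovPoint_add_one : markovPoint n κ (n + 1) = -κ := by
  grind [markovPoint]

lemma markovPoint_add_two : markovPoint n κ (n + 2) = 0 := by
  grind [markovPoint]

lemma markovPoint_add_three : markovPoint n κ (n + 3) = κ := by
  grind [markovPoint]

lemma markovPoint_rev (hn : 1 ≤ n) {i : ℕ} (hi : i ≤ 2 * n + 4) :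
    markovPoint n κ (2 * n + 4 - i) = -markovPoint n κ i := by
  grind [markovPoint]

lemma markovInterval_rev (hn : 1 ≤ n) {i : ℕ} (hi : i < 2 * n + 4) :
    markovInterval n κ (2 * n + 4 - i) = -markovInterval n κ (i + 1) := by
  rw [markovInterval, markovInterval, Set.neg_Ioo, Nat.add_sub_cancel,
    ← markovPoint_rev hn (by omega : i + 1 ≤ 2 * n + 4), ← markovPoint_rev hn hi.le,
    Nat.sub_sub]

lemma markovPoint_lt_add_one_of_le (hn : 1 ≤ n) (hκ : κ ∈ Set.Ioo (0 : ℝ) (1 / 2))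
    (heq : (2 + 2 * κ) ^ n * κ = 1) {i : ℕ} (hi : i ≤ n + 1) :
    markovPoint n κ i < markovPoint n κ (i + 1) := by
  obtain ⟨hκ0, hκ1⟩ := hκ
  have hpos (k : ℕ) : 0 < (2 + 2 * κ) ^ k * κ := by positivity
  obtain rfl | rfl | hi := (show i = n ∨ i = n + 1 ∨ i < n by omega)
  · rw [markovPoint_self hn, markovPoint_add_one]; linarith
  · rw [markovPoint_add_one, markovPoint_add_two]; linarith
  obtain rfl | hi0 := Nat.eq_zero_or_pos i
  · rw [markovPoint_zero]
    obtain rfl | hn1 := (show n = 1 ∨ 1 < n by omega)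
    · rw [zero_add, markovPoint_self le_rfl]; norm_num
    · rw [markovPoint_of_lt le_rfl hn1]; linarith [hpos 1]
  rw [markovPoint_of_lt hi0 hi]
  obtain hin | rfl := (show i + 1 < n ∨ i + 1 = n by omega)
  · rw [markovPoint_of_lt (by omega) hin, pow_succ]
    nlinarith [hpos i]
  · -- `(2+2κ)^{n-1} κ = 1 / (2+2κ) < 1/2`
    rw [markovPoint_self hn]
    rw [pow_succ] at heq
    nlinarith [hpos i]

lemma markovPoint_strictMonoOn (hn : 1 ≤ n) (hκ : κ ∈ Set.Ioo (0 : ℝ) (1 / 2))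
    (heq : (2 + 2 * κ) ^ n * κ = 1) :
    StrictMonoOn (markovPoint n κ) (Set.Iic (2 * n + 4)) := by
  refine strictMonoOn_Iic_of_lt_succ fun i hi => ?_
  rw [Order.succ_eq_add_one]
  rcases le_or_gt i (n + 1) with hi' | hi'
  · exact markovPoint_lt_add_one_of_le hn hκ heq hi'
  · have hrev (j : ℕ) (hj : j ≤ 2 * n + 4) :
        markovPoint n κ j = -markovPoint n κ (2 * n + 4 - j) := by
      rw [markovPoint_rev hn hj, neg_neg]
    rw [hrev i hi.le, hrev (i + 1) hi, neg_lt_neg_iff,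
      show 2 * n + 4 - i = 2 * n + 4 - (i + 1) + 1 by omega]
    exact markovPoint_lt_add_one_of_le hn hκ heq (by omega)

end MarkovPoint

lemma Amat_rev {n : ℕ} (hn : 1 ≤ n) (κ : ℝ) (i j : Fin (2 * n + 4)) :
    Amat n κ i.rev j.rev = Amat n κ i j := by
  have hrev (k : Fin (2 * n + 4)) : (k.rev : ℕ) + 1 = 2 * n + 4 - k := by
    rw [Fin.val_rev]; omega
  simp only [Amat, Matrix.of_apply]
  rw [hrev i, hrev j, markovInterval_rev hn i.isLt, markovInterval_rev hn j.isLt,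
    image_pairedTent_neg, Set.neg_subset_neg]

lemma Jmat_eq_permMatrix (n : ℕ) : Jmat n = Fin.revPerm.permMatrix ℂ := by
  ext i j
  simp only [Jmat, Matrix.of_apply, Equiv.Perm.permMatrix, PEquiv.toMatrix_apply,
    Equiv.toPEquiv_apply, Option.mem_def, Option.some.injEq, Fin.revPerm_apply, Fin.ext_iff,
    Fin.val_rev]
  congr 1; apply propext; omega

lemma Jmat_mulVec_intervalVec (n a b : ℕ) :
    Jmat n *ᵥ intervalVec a b = intervalVec (2 * n + 4 - b) (2 * n + 4 - a) := by
  rw [Jmat_eq_permMatrix, permMatrix_revPerm_mulVec_intervalVec]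

theorem Amat_Jmat_commute {n : ℕ} (hn : 1 ≤ n) (κ : ℝ) : Commute (Amat n κ) (Jmat n) := by
  rw [Jmat_eq_permMatrix]
  exact commute_permMatrix_of_apply_apply _ (Amat_rev hn κ)

/-- The index of the partition point `(2+2κ)^k κ - 1 = T^k(-κ)`, for `1 ≤ k ≤ n`;
at `k = n` this point is `0 = p_{n+2}`. -/
def orbitIndex (n k : ℕ) : ℕ := if k < n then k else n + 2

def leftImageIndex (n j : ℕ) : ℕ :=
  if j = 0 then 0 else if j < n then orbitIndex n (j + 1) else n + 3

section Columns

variable {n : ℕ} {κ : ℝ}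

lemma orbitIndex_le {k : ℕ} : orbitIndex n k ≤ n + 2 := by
  grind [orbitIndex]

lemma leftImageIndex_le {k : ℕ} : leftImageIndex n k ≤ n + 3 := by
  grind [leftImageIndex, orbitIndex]

lemma leftImageIndex_le_add_one {k : ℕ} (hk : k < n) :
    leftImageIndex n k ≤ leftImageIndex n (k + 1) := by
  grind [leftImageIndex, orbitIndex]

lemma markovPoint_orbitIndex (heq : (2 + 2 * κ) ^ n * κ = 1) {k : ℕ} (hk : 1 ≤ k)
    (hkn : k ≤ n) : markovPoint n κ (orbitIndex n k) = (2 + 2 * κ) ^ k * κ - 1 := by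
  unfold orbitIndex
  split_ifs with h
  · exact markovPoint_of_lt hk h
  · rw [markovPoint_add_two, show k = n by omega, heq, sub_self]

lemma pairedTent_markovPoint_of_le (hn : 1 ≤ n) (hκ : κ ∈ Set.Ioo (0 : ℝ) (1 / 2))
    (heq : (2 + 2 * κ) ^ n * κ = 1) {j : ℕ} (hj : j ≤ n) :
    pairedTent κ (markovPoint n κ j) = markovPoint n κ (leftImageIndex n j) := by
  have hle : markovPoint n κ j ≤ -(1 / 2) := by
    rw [← markovPoint_self hn]
    exact (markovPoint_strictMonoOn hn hκ heq).monotoneOn (Set.mem_Iic.2 (by omega))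
      (Set.mem_Iic.2 (by omega)) hj
  rw [pairedTent_of_le_neg_half hle, leftImageIndex]
  split_ifs with h0 hjn
  · subst h0; rw [markovPoint_zero]; ring
  · rw [markovPoint_of_lt (by omega) hjn, markovPoint_orbitIndex heq (by omega) (by omega),
      pow_succ']
    ring
  · rw [show j = n by omega, markovPoint_self hn, markovPoint_add_three]; ring

lemma Amat_mulVec_intervalVec_of_image
    (hmono : StrictMonoOn (markovPoint n κ) (Set.Iic (2 * n + 4)))
    {j α β : ℕ} (hj : j < 2 * n + 4) (hα : α ≤ 2 * n + 4) (hβ : β ≤ 2 * n + 4)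
    (himage : pairedTent κ '' markovInterval n κ (j + 1) =
      Set.Ioo (markovPoint n κ α) (markovPoint n κ β)) :
    Amat n κ *ᵥ intervalVec j (j + 1) = intervalVec α β := by
  ext i
  have hle {a b : ℕ} (ha : a ≤ 2 * n + 4) (hb : b ≤ 2 * n + 4) :
      markovPoint n κ a ≤ markovPoint n κ b ↔ a ≤ b :=
    hmono.le_iff_le ha hb
  have hi := i.isLt
  have hentry : markovInterval n κ (i + 1) ⊆ pairedTent κ '' markovInterval n κ (j + 1) ↔
      α ≤ i ∧ i < β := by
    rw [himage, markovInterval, Nat.add_sub_cancel,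
      Set.Ioo_subset_Ioo_iff (hmono (Set.mem_Iic.2 (by omega)) (Set.mem_Iic.2 (by omega))
        (by omega)),
      hle hα (by omega), hle (by omega) hβ, Nat.add_one_le_iff]
  rw [intervalVec_add_one hj, Matrix.mulVec_single_one]
  simp only [Matrix.col_apply, Amat, Matrix.of_apply, hentry, intervalVec]

lemma Amat_mulVec_intervalVec_of_lt (hn : 1 ≤ n) (hκ : κ ∈ Set.Ioo (0 : ℝ) (1 / 2))
    (heq : (2 + 2 * κ) ^ n * κ = 1) {j : ℕ} (hj : j < n) :
    Amat n κ *ᵥ intervalVec j (j + 1) =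
      intervalVec (leftImageIndex n j) (leftImageIndex n (j + 1)) := by
  have hmono := markovPoint_strictMonoOn hn hκ heq
  have hle {i : ℕ} (hi : i ≤ n) : markovPoint n κ i ≤ -(1 / 2) := by
    rw [← markovPoint_self hn]
    exact hmono.monotoneOn (Set.mem_Iic.2 (by omega)) (Set.mem_Iic.2 (by omega)) hi
  refine Amat_mulVec_intervalVec_of_image hmono (by omega) (leftImageIndex_le.trans (by omega))
    (leftImageIndex_le.trans (by omega)) ?_
  rw [markovInterval, Nat.add_sub_cancel,
    image_pairedTent_Ioo_of_le_neg_half (by linarith [hκ.1]) (hle hj.le) (hle hj),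
    pairedTent_markovPoint_of_le hn hκ heq hj.le, pairedTent_markovPoint_of_le hn hκ heq hj]

lemma Amat_mulVec_intervalVec_self (hn : 1 ≤ n) (hκ : κ ∈ Set.Ioo (0 : ℝ) (1 / 2))
    (heq : (2 + 2 * κ) ^ n * κ = 1) :
    Amat n κ *ᵥ intervalVec n (n + 1) = intervalVec (orbitIndex n 1) (n + 3) := by
  refine Amat_mulVec_intervalVec_of_image (markovPoint_strictMonoOn hn hκ heq) (by omega)
    (orbitIndex_le.trans (by omega)) (by omega) ?_
  rw [markovInterval, Nat.add_sub_cancel, markovPoint_self hn, markovPoint_add_one,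
    image_pairedTent_Ioo_of_neg_half_le (by linarith [hκ.1]) le_rfl (by linarith [hκ.1]),
    markovPoint_orbitIndex heq le_rfl hn, markovPoint_add_three]
  congr 1 <;> ring

lemma Amat_mulVec_intervalVec_add_one (hn : 1 ≤ n) (hκ : κ ∈ Set.Ioo (0 : ℝ) (1 / 2))
    (heq : (2 + 2 * κ) ^ n * κ = 1) :
    Amat n κ *ᵥ intervalVec (n + 1) (n + 2) = intervalVec 0 (orbitIndex n 1) := by
  refine Amat_mulVec_intervalVec_of_image (markovPoint_strictMonoOn hn hκ heq) (by omega)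
    (by omega) (orbitIndex_le.trans (by omega)) ?_
  rw [markovInterval, Nat.add_sub_cancel, markovPoint_add_one, markovPoint_add_two,
    image_pairedTent_Ioo_of_neg_half_le (by linarith [hκ.1]) (by linarith [hκ.2]) le_rfl,
    markovPoint_orbitIndex heq le_rfl hn, markovPoint_zero]
  congr 1 <;> ring

end Columns

section Orbit

variable {n : ℕ} {κ : ℝ}

lemma Amat_mulVec_intervalVec_zero_of_le (hn : 1 ≤ n) (hκ : κ ∈ Set.Ioo (0 : ℝ) (1 / 2))
    (heq : (2 + 2 * κ) ^ n * κ = 1) {k : ℕ} (hk : k ≤ n) :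
    Amat n κ *ᵥ intervalVec 0 k = intervalVec 0 (leftImageIndex n k) := by
  induction k with
  | zero => simp [intervalVec_self, leftImageIndex]
  | succ k ih =>
    rw [← intervalVec_add_intervalVec (Nat.zero_le k) k.le_succ, Matrix.mulVec_add,
      ih (by omega), Amat_mulVec_intervalVec_of_lt hn hκ heq (by omega),
      intervalVec_add_intervalVec (Nat.zero_le _) (leftImageIndex_le_add_one (by omega))]

lemma Amat_mulVec_intervalVec_zero_add_two (hn : 1 ≤ n) (hκ : κ ∈ Set.Ioo (0 : ℝ) (1 / 2))
    (heq : (2 + 2 * κ) ^ n * κ = 1) :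
    Amat n κ *ᵥ intervalVec 0 (n + 2) = 2 • intervalVec 0 (n + 3) := by
  rw [← intervalVec_add_intervalVec (by omega : 0 ≤ n + 1) (by omega : n + 1 ≤ n + 2),
    ← intervalVec_add_intervalVec (by omega : 0 ≤ n) (by omega : n ≤ n + 1),
    Matrix.mulVec_add, Matrix.mulVec_add, Amat_mulVec_intervalVec_zero_of_le hn hκ heq le_rfl,
    Amat_mulVec_intervalVec_self hn hκ heq, Amat_mulVec_intervalVec_add_one hn hκ heq,
    show leftImageIndex n n = n + 3 by simp [leftImageIndex]; omega, add_assoc,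
    add_comm (intervalVec (orbitIndex n 1) _),
    intervalVec_add_intervalVec (Nat.zero_le _) (orbitIndex_le.trans (by omega)), two_smul]

lemma Amat_pow_mulVec_intervalVec_orbitIndex (hn : 1 ≤ n) (hκ : κ ∈ Set.Ioo (0 : ℝ) (1 / 2))
    (heq : (2 + 2 * κ) ^ n * κ = 1) {k : ℕ} (hk : k < n) :
    (Amat n κ ^ k) *ᵥ intervalVec 0 (orbitIndex n 1) = intervalVec 0 (orbitIndex n (k + 1)) := by
  induction k with
  | zero => rw [pow_zero, Matrix.one_mulVec]
  | succ k ih =>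
    rw [pow_succ', ← Matrix.mulVec_mulVec, ih (by omega),
      show orbitIndex n (k + 1) = k + 1 by simp [orbitIndex]; omega,
      Amat_mulVec_intervalVec_zero_of_le hn hκ heq (by omega), leftImageIndex, if_neg (by omega),
      if_pos (by omega)]

lemma Amat_pow_mulVec_intervalVec_orbitIndex_one (hn : 1 ≤ n)
    (hκ : κ ∈ Set.Ioo (0 : ℝ) (1 / 2)) (heq : (2 + 2 * κ) ^ n * κ = 1) :
    (Amat n κ ^ n) *ᵥ intervalVec 0 (orbitIndex n 1) = 2 • intervalVec 0 (n + 3) := by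
  obtain ⟨m, rfl⟩ : ∃ m, n = m + 1 := ⟨n - 1, by omega⟩
  rw [pow_succ', ← Matrix.mulVec_mulVec,
    Amat_pow_mulVec_intervalVec_orbitIndex hn hκ heq (Nat.lt_add_one m),
    show orbitIndex (m + 1) (m + 1) = m + 1 + 2 by simp [orbitIndex],
    Amat_mulVec_intervalVec_zero_add_two hn hκ heq]

lemma Amat_mulVec_intervalVec_zero_add_three (hn : 1 ≤ n) (hκ : κ ∈ Set.Ioo (0 : ℝ) (1 / 2))
    (heq : (2 + 2 * κ) ^ n * κ = 1) :
    Amat n κ *ᵥ intervalVec 0 (n + 3) =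
      2 • intervalVec 0 (n + 3) + Jmat n *ᵥ intervalVec 0 (orbitIndex n 1) := by
  have hJ : intervalVec (n + 2) (n + 3) = Jmat n *ᵥ intervalVec (n + 1) (n + 2) := by
    rw [Jmat_mulVec_intervalVec]
    congr 1 <;> omega
  conv_lhs =>
    rw [← intervalVec_add_intervalVec (by omega : 0 ≤ n + 2) (by omega : n + 2 ≤ n + 3)]
  rw [Matrix.mulVec_add, Amat_mulVec_intervalVec_zero_add_two hn hκ heq, hJ,
    Matrix.mulVec_mulVec, (Amat_Jmat_commute hn κ).eq, ← Matrix.mulVec_mulVec,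
    Amat_mulVec_intervalVec_add_one hn hκ heq]

end Orbit

lemma intervalVec_add_one_mem {n : ℕ} (hn : 1 ≤ n) (K : Submodule ℂ (Fin (2 * n + 4) → ℂ))
    (hJ : ∀ x ∈ K, Jmat n *ᵥ x ∈ K)
    (horbit : ∀ k < n, intervalVec 0 (orbitIndex n (k + 1)) ∈ K)
    (hu : intervalVec 0 (n + 3) ∈ K) (he : intervalVec n (n + 1) ∈ K) {i : ℕ}
    (hi : i < 2 * n + 4) : intervalVec i (i + 1) ∈ K := by
  have hJ' {a b : ℕ} (hab : intervalVec a b ∈ K) :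
      intervalVec (2 * n + 4 - b) (2 * n + 4 - a) ∈ K :=
    Jmat_mulVec_intervalVec n a b ▸ hJ _ hab
  have h2 : intervalVec 0 (n + 2) ∈ K := by
    simpa [orbitIndex, Nat.sub_add_cancel hn] using horbit (n - 1) (by omega)
  have e2 : intervalVec (n + 2) (n + 3) ∈ K := by
    rw [intervalVec_eq_sub (by omega)]; exact K.sub_mem hu h2
  have e1 : intervalVec (n + 1) (n + 2) ∈ K := by
    simpa [show 2 * n + 4 - (n + 3) = n + 1 by omega, show 2 * n + 4 - (n + 2) = n + 2 by omega]
      using hJ' e2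
  have h1 : intervalVec 0 (n + 1) ∈ K := by
    rw [intervalVec_zero_eq_sub (Nat.le_succ _)]; exact K.sub_mem h2 e1
  have h0 : intervalVec 0 n ∈ K := by
    rw [intervalVec_zero_eq_sub (Nat.le_succ _)]; exact K.sub_mem h1 he
  have hzero {k : ℕ} (hk : k ≤ n + 3) : intervalVec 0 k ∈ K := by
    obtain hk | hk | hk | hk | hk :=
      (show k < n ∨ k = n ∨ k = n + 1 ∨ k = n + 2 ∨ k = n + 3 by omega)
    · rcases k.eq_zero_or_pos with rfl | hk0
      · rw [intervalVec_self]; exact K.zero_mem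
      · simpa [orbitIndex, Nat.sub_add_cancel hk0, hk] using horbit (k - 1) (by omega)
    all_goals rw [hk]
    exacts [h0, h1, h2, hu]
  have hsmall {i : ℕ} (hi : i ≤ n + 2) : intervalVec i (i + 1) ∈ K := by
    rw [intervalVec_eq_sub i.le_succ]
    exact K.sub_mem (hzero (by omega)) (hzero (by omega))
  rcases le_or_gt i (n + 2) with hi' | hi'
  · exact hsmall hi'
  · simpa [show 2 * n + 4 - (2 * n + 3 - i + 1) = i by omega,
      show 2 * n + 4 - (2 * n + 3 - i) = i + 1 by omega]
      using hJ' (hsmall (i := 2 * n + 3 - i) (by omega))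

theorem Amat_relation {n : ℕ} (hn : 1 ≤ n) {κ : ℝ} (hκ : κ ∈ Set.Ioo (0 : ℝ) (1 / 2))
    (heq : (2 + 2 * κ) ^ n * κ = 1) :
    Amat n κ * (Amat n κ ^ (n + 1) - 2 * Amat n κ ^ n - 2 * Jmat n) = 0 := by
  set f := Matrix.toLinAlgEquiv' (Amat n κ)
  set g := Matrix.toLinAlgEquiv' (Jmat n)
  have hfg : Commute f g := (Amat_Jmat_commute hn κ).map _
  have hf_pow (k : ℕ) (v) : (f ^ k) v = Amat n κ ^ k *ᵥ v := by
    rw [← map_pow, Matrix.toLinAlgEquiv'_apply]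
  set K := LinearMap.ker (tentRelation f g n)
  have hpowK (k : ℕ) {x} (hx : x ∈ K) : Amat n κ ^ k *ᵥ x ∈ K :=
    hf_pow k x ▸ apply_mem_ker_tentRelation ((Commute.refl f).pow_left k) (hfg.pow_left k) hx
  have hc := Amat_pow_mulVec_intervalVec_orbitIndex_one hn hκ heq
  have hu := Amat_mulVec_intervalVec_zero_add_three hn hκ heq
  have hcK : intervalVec 0 (orbitIndex n 1) ∈ K :=
    tentRelation_apply_eq_zero_of_pow_apply (hf_pow n _ ▸ hc) hu
  have huK : intervalVec 0 (n + 3) ∈ K := by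
    have h2u := hpowK n hcK
    rwa [hc, ← Nat.cast_smul_eq_nsmul ℂ, Submodule.smul_mem_iff K (by norm_num)] at h2u
  have heK : intervalVec n (n + 1) ∈ K := by
    refine tentRelation_apply_eq_zero_of_apply_eq_sub hfg (hf_pow n _ ▸ hc) hu ?_
    rw [Matrix.toLinAlgEquiv'_apply, Amat_mulVec_intervalVec_self hn hκ heq,
      intervalVec_eq_sub (orbitIndex_le.trans (by omega))]
  have horbit (k : ℕ) (hk : k < n) : intervalVec 0 (orbitIndex n (k + 1)) ∈ K :=
    Amat_pow_mulVec_intervalVec_orbitIndex hn hκ heq hk ▸ hpowK k hcK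
  have hJ (x) (hx : x ∈ K) : Jmat n *ᵥ x ∈ K :=
    apply_mem_ker_tentRelation (h := g) hfg.symm (Commute.refl g) hx
  apply (Matrix.toLinAlgEquiv' (R := ℂ)).injective
  rw [map_zero, map_mul, map_sub, map_sub, map_mul, map_mul, map_pow, map_pow, map_ofNat]
  refine (Pi.basisFun ℂ _).ext fun i => ?_
  rw [Pi.basisFun_apply, ← intervalVec_add_one i.isLt, LinearMap.zero_apply]
  exact intervalVec_add_one_mem hn K hJ horbit huK heK i.isLt

/-- For every `n ≥ 1` (with `κ_n` the unique `κ ∈ (0,1/2)` satisfying `(2+2κ)^n κ = 1`),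
`A_n` and `J_n` commute, and `A_n (A_n^{n+1} - 2A_n^n - 2J_n) = 0`. -/
theorem Amat_Jmat_relation (n : ℕ) (hn : 1 ≤ n) (κ : ℝ)
    (hκ : κ ∈ Set.Ioo (0 : ℝ) (1/2)) (heq : (2 + 2*κ)^n * κ = 1) :
    Amat n κ * Jmat n = Jmat n * Amat n κ ∧
    Amat n κ * ((Amat n κ) ^ (n + 1) - 2 * (Amat n κ) ^ n - 2 * Jmat n) = 0 :=
  ⟨(Amat_Jmat_commute hn κ).eq, Amat_relation hn hκ heq⟩
end

section
/- For every integer n ≥ 2, the points q_0, q_1, …, q_{n+3} are strictly increasing, and the collection {S_i}_{i=1}^{n+3} is a Markov partition for T̃_n: for all indices 1 ≤ i, j ≤ n+3, if the image T̃_n(S_j) intersects S_i, then S_i ⊆ T̃_n(S_j). -/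
open Matrix

/-- The factor map `T̃_κ : [0,1] → [0,1]`, `T̃_κ(x) = |T_κ(x)|`. -/
noncomputable def factorTent (κ : ℝ) (x : ℝ) : ℝ := |pairedTent κ x|

/-- The partition points `q_0 < q_1 < ⋯ < q_{n+3}` of the Markov partition for `T̃_n`
(`n ≥ 2`): `q_0 = 0`, `q_1 = κ`, `q_2 = 1/2 - κ/(2(1+κ))`, `q_3 = 1/2`,
`q_{3+i} = 1 - (2+2κ)^{n-i} κ` for `1 ≤ i ≤ n-1`, and `q_{n+3} = 1`. -/
noncomputable def factorPoint (n : ℕ) (κ : ℝ) (i : ℕ) : ℝ :=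
  if i = 0 then 0
  else if i = 1 then κ
  else if i = 2 then 1/2 - κ/(2*(1+κ))
  else if i = 3 then 1/2
  else if i < n + 3 then 1 - (2 + 2*κ)^(n + 3 - i) * κ
  else 1

/-- The interval `S_i = (q_{i-1}, q_i)`, for `1 ≤ i ≤ n+3`. -/
noncomputable def factorInterval (n : ℕ) (κ : ℝ) (i : ℕ) : Set ℝ :=
  Set.Ioo (factorPoint n κ (i - 1)) (factorPoint n κ i)

/-!
Write `L = 2 + 2κ`. On `(0, 1]` the map `T̃` has four affine laps: `1 - Lx` up to `1/L = q_2`,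
`Lx - 1` up to `1/2 = q_3`, `(L - 1) - Lx` up to `1 - 1/L`, and `Lx - (L - 1)` beyond. The equation
`L^n κ = 1` gives `q_4 = 1 - 1/L`, so every `S_j` lies inside one lap, and it makes each lap send
the endpoints of `S_j` to partition points (the last lap sends `q_k` to `q_{k-1}` and `q_4` to
`q_0`). Hence every `T̃(S_j)` is an interval `(q_a, q_b)`, and since `q` is monotone such an
interval contains each `S_i` it meets.
-/

open Set

theorem Monotone.Ioo_sub_one_subset_of_inter_nonempty {α : Type*} [Preorder α] {q : ℕ → α}
    (hq : Monotone q) {a b i : ℕ} (h : (Ioo (q a) (q b) ∩ Ioo (q (i - 1)) (q i)).Nonempty) :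
    Ioo (q (i - 1)) (q i) ⊆ Ioo (q a) (q b) := by
  obtain ⟨x, ⟨hax, hxb⟩, hix, hxi⟩ := h
  refine Ioo_subset_Ioo ?_ ?_
  · rcases le_or_gt a (i - 1) with hai | hai
    · exact hq hai
    · exact absurd (hq (show i ≤ a by omega)) (hax.trans hxi).not_ge
  · rcases le_or_gt i b with hib | hib
    · exact hq hib
    · exact absurd (hq (show b ≤ i - 1 by omega)) (hix.trans hxb).not_ge

section Affine

variable {K : Type*} [Field K] [LinearOrder K] [IsStrictOrderedRing K] {f : K → K} {a b c d : K}

theorem image_Ioo_eq_of_eqOn_mul_sub (ha : 0 < a) (hf : EqOn f (fun x => a * x - b) (Ioo c d)) :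
    f '' Ioo c d = Ioo (a * c - b) (a * d - b) := by
  simp_rw [hf.image_eq, sub_eq_add_neg]
  exact image_affine_Ioo ha _ c d

theorem image_Ioo_eq_of_eqOn_sub_mul (ha : 0 < a) (hf : EqOn f (fun x => b - a * x) (Ioo c d)) :
    f '' Ioo c d = Ioo (b - a * d) (b - a * c) := by
  have hcomp : (fun x => b - a * x) = (fun y => a * y + b) ∘ Neg.neg := by
    ext x
    simp only [Function.comp_apply]
    ring
  rw [hf.image_eq, hcomp, image_comp, image_neg_eq_neg, neg_Ioo, image_affine_Ioo ha]
  congr 1 <;> ring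

end Affine

theorem mul_lt_one_of_pow_mul_eq_one {L κ : ℝ} {n : ℕ} (hL : 1 < L) (hn : 1 < n) (hκ : 0 < κ)
    (heq : L ^ n * κ = 1) : L * κ < 1 := by
  calc L * κ = L ^ 1 * κ := by rw [pow_one]
    _ < L ^ n * κ := mul_lt_mul_of_pos_right (pow_lt_pow_right₀ hL hn) hκ
    _ = 1 := heq

section FactorTent

variable {κ c d x : ℝ}

theorem factorTent_of_pos_of_le_half (hx0 : 0 < x) (hx : x ≤ 1 / 2) :
    factorTent κ x = |1 - (2 + 2 * κ) * x| := by
  unfold factorTent pairedTent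
  rw [if_neg (by linarith), if_neg (by linarith), if_neg hx0.ne', if_pos hx]
  ring_nf

theorem factorTent_of_half_lt (hx : 1 / 2 < x) :
    factorTent κ x = |(2 + 2 * κ) * x - (1 + 2 * κ)| := by
  unfold factorTent pairedTent
  rw [if_neg (by linarith), if_neg (by linarith), if_neg (by linarith), if_neg (by linarith)]
  ring_nf

theorem factorTent_image_Ioo_of_le_inv (hκ : 0 ≤ κ) (hc : 0 ≤ c) (hd : d ≤ 1 / (2 + 2 * κ)) :
    factorTent κ '' Ioo c d = Ioo (1 - (2 + 2 * κ) * d) (1 - (2 + 2 * κ) * c) := by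
  have hL : 0 < 2 + 2 * κ := by linarith
  have hinv : 1 / (2 + 2 * κ) ≤ 1 / 2 := one_div_le_one_div_of_le two_pos (by linarith)
  refine image_Ioo_eq_of_eqOn_sub_mul hL fun x hx => ?_
  have hLx : (2 + 2 * κ) * x < 1 := by
    have := hx.2.trans_le hd
    rwa [lt_div_iff₀ hL, mul_comm] at this
  rw [factorTent_of_pos_of_le_half (hc.trans_lt hx.1) (by linarith [hx.2]),
    abs_of_pos (by linarith)]

theorem factorTent_image_Ioo_of_inv_le (hκ : 0 ≤ κ) (hc : 1 / (2 + 2 * κ) ≤ c) (hd : d ≤ 1 / 2) :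
    factorTent κ '' Ioo c d = Ioo ((2 + 2 * κ) * c - 1) ((2 + 2 * κ) * d - 1) := by
  have hL : 0 < 2 + 2 * κ := by linarith
  refine image_Ioo_eq_of_eqOn_mul_sub hL fun x hx => ?_
  have hLx : 1 < (2 + 2 * κ) * x := by
    have := hc.trans_lt hx.1
    rwa [div_lt_iff₀ hL, mul_comm] at this
  have hx0 : 0 < x := (one_div_pos.2 hL).trans_le hc |>.trans hx.1
  rw [factorTent_of_pos_of_le_half hx0 (by linarith [hx.2]), abs_of_neg (by linarith)]
  ring

theorem mul_sub_eq_mul_sub_one_sub_inv (hκ : 0 ≤ κ) (x : ℝ) :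
    (2 + 2 * κ) * x - (1 + 2 * κ) = (2 + 2 * κ) * (x - (1 - 1 / (2 + 2 * κ))) := by
  have hL : (2 + 2 * κ) ≠ 0 := by positivity
  field_simp
  ring

theorem factorTent_image_Ioo_of_half_le (hκ : 0 ≤ κ) (hc : 1 / 2 ≤ c)
    (hd : d ≤ 1 - 1 / (2 + 2 * κ)) :
    factorTent κ '' Ioo c d =
      Ioo ((1 + 2 * κ) - (2 + 2 * κ) * d) ((1 + 2 * κ) - (2 + 2 * κ) * c) := by
  have hL : 0 < 2 + 2 * κ := by linarith
  refine image_Ioo_eq_of_eqOn_sub_mul hL fun x hx => ?_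
  have hneg : (2 + 2 * κ) * x - (1 + 2 * κ) < 0 := by
    rw [mul_sub_eq_mul_sub_one_sub_inv hκ]
    exact mul_neg_of_pos_of_neg hL (by linarith [hx.2])
  rw [factorTent_of_half_lt (by linarith [hx.1]), abs_of_neg hneg]
  ring

theorem factorTent_image_Ioo_of_one_sub_inv_le (hκ : 0 ≤ κ) (hc : 1 - 1 / (2 + 2 * κ) ≤ c) :
    factorTent κ '' Ioo c d =
      Ioo ((2 + 2 * κ) * c - (1 + 2 * κ)) ((2 + 2 * κ) * d - (1 + 2 * κ)) := by
  have hL : 0 < 2 + 2 * κ := by linarith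
  have hinv : 1 / (2 + 2 * κ) ≤ 1 / 2 := one_div_le_one_div_of_le two_pos (by linarith)
  refine image_Ioo_eq_of_eqOn_mul_sub hL fun x hx => ?_
  have hpos : 0 < (2 + 2 * κ) * x - (1 + 2 * κ) := by
    rw [mul_sub_eq_mul_sub_one_sub_inv hκ]
    exact mul_pos hL (by linarith [hx.1])
  rw [factorTent_of_half_lt (by linarith [hx.1]), abs_of_pos hpos]

end FactorTent

section FactorPoint

variable {n i : ℕ} {κ : ℝ}

@[simp] theorem factorPoint_zero : factorPoint n κ 0 = 0 := by simp [factorPoint]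

@[simp] theorem factorPoint_one : factorPoint n κ 1 = κ := by simp [factorPoint]

theorem factorPoint_two (hκ : 0 ≤ κ) : factorPoint n κ 2 = 1 / (2 + 2 * κ) := by
  have : 1 + κ ≠ 0 := by positivity
  rw [factorPoint, if_neg two_ne_zero, if_neg (by norm_num), if_pos rfl]
  field_simp
  ring

@[simp] theorem factorPoint_three : factorPoint n κ 3 = 1 / 2 := by simp [factorPoint]

theorem factorPoint_of_four_le_of_lt (h4 : 4 ≤ i) (hi : i < n + 3) :
    factorPoint n κ i = 1 - (2 + 2 * κ) ^ (n + 3 - i) * κ := by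
  rw [factorPoint, if_neg (by omega : i ≠ 0), if_neg (by omega : i ≠ 1), if_neg (by omega : i ≠ 2),
    if_neg (by omega : i ≠ 3), if_pos hi]

theorem factorPoint_of_le (h4 : 4 ≤ i) (hi : n + 3 ≤ i) : factorPoint n κ i = 1 := by
  rw [factorPoint, if_neg (by omega : i ≠ 0), if_neg (by omega : i ≠ 1), if_neg (by omega : i ≠ 2),
    if_neg (by omega : i ≠ 3), if_neg (by omega : ¬ i < n + 3)]

theorem factorPoint_four (hn : 2 ≤ n) (hκ : 0 ≤ κ) (heq : (2 + 2 * κ) ^ n * κ = 1) :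
    factorPoint n κ 4 = 1 - 1 / (2 + 2 * κ) := by
  have hL : (2 + 2 * κ) ≠ 0 := by positivity
  obtain ⟨m, rfl⟩ : ∃ m, n = m + 1 := ⟨n - 1, by omega⟩
  rw [factorPoint_of_four_le_of_lt le_rfl (by omega), show m + 1 + 3 - 4 = m by omega]
  congr 1
  rw [eq_div_iff hL]
  linear_combination heq

theorem factorPoint_lt_succ (hn : 2 ≤ n) (hκ : 0 < κ) (heq : (2 + 2 * κ) ^ n * κ = 1)
    (hi : i < n + 3) : factorPoint n κ i < factorPoint n κ (i + 1) := by
  have hL : 2 < 2 + 2 * κ := by linarith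
  have hinv : 1 / (2 + 2 * κ) < 1 / 2 := one_div_lt_one_div_of_lt two_pos hL
  match i with
  | 0 => simpa using hκ
  | 1 =>
    rw [factorPoint_one, factorPoint_two hκ.le, lt_div_iff₀ (by linarith), mul_comm]
    exact mul_lt_one_of_pow_mul_eq_one (by linarith) (by omega) hκ heq
  | 2 => rwa [factorPoint_two hκ.le, factorPoint_three]
  | 3 =>
    rw [factorPoint_three, factorPoint_four hn hκ.le heq]
    linarith
  | k + 4 =>
    rw [factorPoint_of_four_le_of_lt (by omega) hi]
    rcases Nat.lt_or_ge (k + 5) (n + 3) with hk | hk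
    · rw [factorPoint_of_four_le_of_lt (by omega) hk]
      have := pow_lt_pow_right₀ (by linarith : 1 < 2 + 2 * κ)
        (show n + 3 - (k + 5) < n + 3 - (k + 4) by omega)
      nlinarith
    · rw [factorPoint_of_le (by omega) hk]
      have := pow_pos (by linarith : 0 < 2 + 2 * κ) (n + 3 - (k + 4))
      nlinarith

theorem factorPoint_monotone (hn : 2 ≤ n) (hκ : 0 < κ) (heq : (2 + 2 * κ) ^ n * κ = 1) :
    Monotone (factorPoint n κ) :=
  monotone_nat_of_le_succ fun i => by
    rcases Nat.lt_or_ge i (n + 3) with hi | hi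
    · exact (factorPoint_lt_succ hn hκ heq hi).le
    · rw [factorPoint_of_le (by omega) hi, factorPoint_of_le (by omega) (by omega)]

theorem factorPoint_strictMonoOn (hn : 2 ≤ n) (hκ : 0 < κ) (heq : (2 + 2 * κ) ^ n * κ = 1) :
    StrictMonoOn (factorPoint n κ) (Iic (n + 3)) :=
  strictMonoOn_Iic_of_lt_succ fun _ hm => factorPoint_lt_succ hn hκ heq hm

end FactorPoint

section Image

variable {n j : ℕ} {κ : ℝ}

theorem exists_factorPoint_eq_mul_factorPoint_sub (hn : 2 ≤ n) (hκ : 0 ≤ κ)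
    (heq : (2 + 2 * κ) ^ n * κ = 1) {k : ℕ} (h4 : 4 ≤ k) (hk : k ≤ n + 3) :
    ∃ a, (2 + 2 * κ) * factorPoint n κ k - (1 + 2 * κ) = factorPoint n κ a := by
  rcases hk.lt_or_eq with hk | rfl
  · rcases h4.eq_or_lt with rfl | h5
    · refine ⟨0, ?_⟩
      have hL : (2 + 2 * κ) ≠ 0 := by positivity
      rw [factorPoint_four hn hκ heq, factorPoint_zero]
      field_simp
      ring
    · refine ⟨k - 1, ?_⟩
      rw [factorPoint_of_four_le_of_lt h4 hk, factorPoint_of_four_le_of_lt (by omega) (by omega),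
        show n + 3 - (k - 1) = n + 3 - k + 1 by omega, pow_succ]
      ring
  · exact ⟨n + 3, by rw [factorPoint_of_le (by omega) le_rfl]; ring⟩

theorem exists_factorTent_image_factorInterval_of_five_le (hn : 2 ≤ n) (hκ : 0 < κ)
    (heq : (2 + 2 * κ) ^ n * κ = 1) (h5 : 5 ≤ j) (hj : j ≤ n + 3) :
    ∃ a b, factorTent κ '' factorInterval n κ j = Ioo (factorPoint n κ a) (factorPoint n κ b) := by
  have hc : 1 - 1 / (2 + 2 * κ) ≤ factorPoint n κ (j - 1) :=
    factorPoint_four hn hκ.le heq ▸ factorPoint_monotone hn hκ heq (by omega : 4 ≤ j - 1)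
  obtain ⟨a, ha⟩ := exists_factorPoint_eq_mul_factorPoint_sub hn hκ.le heq (by omega : 4 ≤ j - 1)
    (by omega)
  obtain ⟨b, hb⟩ := exists_factorPoint_eq_mul_factorPoint_sub hn hκ.le heq (by omega : 4 ≤ j) hj
  exact ⟨a, b, by rw [factorInterval, factorTent_image_Ioo_of_one_sub_inv_le hκ.le hc, ha, hb]⟩

theorem exists_factorTent_image_factorInterval_of_le_four (hn : 2 ≤ n) (hκ : 0 < κ)
    (heq : (2 + 2 * κ) ^ n * κ = 1) (hj1 : 1 ≤ j) (hj4 : j ≤ 4) :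
    ∃ a b, factorTent κ '' factorInterval n κ j = Ioo (factorPoint n κ a) (factorPoint n κ b) := by
  have hL : 0 < 2 + 2 * κ := by linarith
  have hκL : κ ≤ 1 / (2 + 2 * κ) := by
    rw [le_div_iff₀ hL, mul_comm]
    exact (mul_lt_one_of_pow_mul_eq_one (by linarith) (by omega) hκ heq).le
  have hq : factorPoint n κ (n + 2) = 1 - (2 + 2 * κ) * κ := by
    rw [factorPoint_of_four_le_of_lt (by omega) (by omega), show n + 3 - (n + 2) = 1 by omega,
      pow_one]
  have hq4 := factorPoint_four hn hκ.le heq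
  interval_cases j
  · refine ⟨n + 2, n + 3, ?_⟩
    rw [factorInterval, Nat.sub_self, factorPoint_zero, factorPoint_one,
      factorTent_image_Ioo_of_le_inv hκ.le le_rfl hκL, hq, factorPoint_of_le (by omega) le_rfl,
      mul_zero, sub_zero]
  · refine ⟨0, n + 2, ?_⟩
    rw [factorInterval, show 2 - 1 = 1 from rfl, factorPoint_one, factorPoint_two hκ.le,
      factorTent_image_Ioo_of_le_inv hκ.le hκ.le le_rfl, hq, factorPoint_zero,
      mul_one_div_cancel hL.ne', sub_self]
  · refine ⟨0, 1, ?_⟩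
    rw [factorInterval, show 3 - 1 = 2 from rfl, factorPoint_two hκ.le, factorPoint_three,
      factorTent_image_Ioo_of_inv_le hκ.le le_rfl le_rfl, factorPoint_zero, factorPoint_one,
      mul_one_div_cancel hL.ne', sub_self]
    ring_nf
  · refine ⟨0, 1, ?_⟩
    rw [factorInterval, show 4 - 1 = 3 from rfl, factorPoint_three, hq4,
      factorTent_image_Ioo_of_half_le hκ.le le_rfl le_rfl, factorPoint_zero, factorPoint_one]
    congr 1
    · field_simp
      ring
    · ring

theorem exists_factorTent_image_factorInterval (hn : 2 ≤ n) (hκ : 0 < κ)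
    (heq : (2 + 2 * κ) ^ n * κ = 1) (hj1 : 1 ≤ j) (hj : j ≤ n + 3) :
    ∃ a b, factorTent κ '' factorInterval n κ j = Ioo (factorPoint n κ a) (factorPoint n κ b) := by
  rcases Nat.lt_or_ge j 5 with hj5 | hj5
  · exact exists_factorTent_image_factorInterval_of_le_four hn hκ heq hj1 (by omega)
  · exact exists_factorTent_image_factorInterval_of_five_le hn hκ heq hj5 hj

end Image

/-- For every `n ≥ 2` (with `κ_n` the unique `κ ∈ (0,1/2)` satisfying `(2+2κ)^n κ = 1`),
the points `q_0, …, q_{n+3}` are strictly increasing, and `{S_i}_{i=1}^{n+3}` is a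
Markov partition for `T̃_n`: if `T̃_n(S_j)` intersects `S_i`, then `S_i ⊆ T̃_n(S_j)`. -/
theorem factorTent_markov_partition (n : ℕ) (hn : 2 ≤ n) (κ : ℝ)
    (hκ : κ ∈ Set.Ioo (0 : ℝ) (1/2)) (heq : (2 + 2*κ)^n * κ = 1) :
    (∀ i j : ℕ, i < j → j ≤ n + 3 → factorPoint n κ i < factorPoint n κ j) ∧
    (∀ i j : ℕ, 1 ≤ i → i ≤ n + 3 → 1 ≤ j → j ≤ n + 3 →
      ((factorTent κ '' factorInterval n κ j) ∩ factorInterval n κ i).Nonempty →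
      factorInterval n κ i ⊆ factorTent κ '' factorInterval n κ j) := by
  refine ⟨fun i j hij hj => factorPoint_strictMonoOn hn hκ.1 heq (by simp only [mem_Iic]; omega)
    hj hij, ?_⟩
  intro i j _ _ hj1 hj hne
  obtain ⟨a, b, himage⟩ := exists_factorTent_image_factorInterval hn hκ.1 heq hj1 hj
  rw [himage] at hne ⊢
  exact (factorPoint_monotone hn hκ.1 heq).Ioo_sub_one_subset_of_inter_nonempty hne
end
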